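/- arXiv:1204.6522 — 3 statements merged into one kernel-verified Lean document; each statement's English description precedes it below -/
import Mathlib

section
/- The R-transform linearizes: writing R_μ(z) = Σ_{n≥1} kₙ(μ)zⁿ for the free cumulant series of a distribution μ, the relation between moments and free cumulants is equivalent to the functional equation G(G⁻¹(z)) = z where G(z) = Σ_{n≥0} mₙ z^{−n−1} is the Cauchy transform and G⁻¹(z) = 1/z + Σ_{n≥0} k_{n+1} zⁿ. Equivalently, in formal power series terms: M(z) = C(z·(1+M(z))) where M(z) = Σ_{n≥1} mₙzⁿ and C(z) = Σ_{n≥1} kₙzⁿ. -/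
/-- The finset of non-crossing partitions of `{1,…,n}`: a partition is a finset of
nonempty pairwise disjoint blocks covering everything, and it is non-crossing if there
are no `p₁ < q₁ < p₂ < q₂` with `p₁ ∼ p₂`, `q₁ ∼ q₂` but `p₂ ≁ q₁`. -/
noncomputable def NCPartitions (n : ℕ) : Finset (Finset (Finset (Fin n))) :=
  @Finset.filter _
    (fun P =>
      (∀ B ∈ P, B.Nonempty) ∧
      (∀ x : Fin n, ∃! B, B ∈ P ∧ x ∈ B) ∧
      ¬∃ p₁ q₁ p₂ q₂ : Fin n, p₁ < q₁ ∧ q₁ < p₂ ∧ p₂ < q₂ ∧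
        (∃ B ∈ P, p₁ ∈ B ∧ p₂ ∈ B) ∧ (∃ B ∈ P, q₁ ∈ B ∧ q₂ ∈ B) ∧
        ¬∃ B ∈ P, q₁ ∈ B ∧ p₂ ∈ B)
    (Classical.decPred _) Finset.univ

/-- Composition `f ∘ g` of formal power series (`g` with zero constant term),
defined coefficientwise. -/
noncomputable def pscomp (f g : PowerSeries ℂ) : PowerSeries ℂ :=
  PowerSeries.mk fun n => ∑ k ∈ Finset.range (n + 1),
    PowerSeries.coeff k f * PowerSeries.coeff n (g ^ k)

/-!
Decompose a non-crossing partition of `{0, …, n}` at the second element `j + 1` of the block of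
`0` (at `j = n` if that block is `{0}`). No block crosses the block of `0`, so the points
`1, …, j` carry a non-crossing partition `Q`, and `0, j + 1, …, n` with `0` merged into `j + 1`
carry a non-crossing partition `R` of `n - j` points whose block of `0` is one point shorter.
Weighting the block of `0` by `c (s + #B)` therefore gives `H_s = c_s + z A H_{s+1}` for the
generating series `H_s` of the weighted sums, where `A = 1 + M` and `M` is the moment series.
Hence `H_s = Σ_k c_{s+k} (z A)^k`, and for `s = 0` this is `M = C (z (1 + M))`. The equation
determines `M`, since its `n`-th coefficient on the right involves only `m_1, …, m_{n-1}`.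
-/

open Finset

theorem Finset.card_filter_mem_of_injOn {α β : Type*} [DecidableEq β] {φ : α → β}
    {T : Finset α} {B : Finset β} (hinj : Set.InjOn φ T) (hB : ↑B ⊆ φ '' T) :
    #(T.filter (φ · ∈ B)) = #B :=
  card_nbij φ (fun x hx => (mem_filter.mp hx).2) (hinj.mono fun x hx => (mem_filter.mp hx).1)
    fun y hy => by
      obtain ⟨x, hx, rfl⟩ := hB hy
      exact ⟨x, mem_filter.mpr ⟨hx, hy⟩, rfl⟩

namespace NonCrossing

variable {α β γ : Type*} [LinearOrder α] [LinearOrder β] [LinearOrder γ]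

structure IsNCPartition (S : Finset α) (P : Finset (Finset α)) : Prop where
  nonempty : ∀ B ∈ P, B.Nonempty
  subset : ∀ B ∈ P, B ⊆ S
  exists_mem : ∀ x ∈ S, ∃ B ∈ P, x ∈ B
  eq_of_mem : ∀ B ∈ P, ∀ C ∈ P, ∀ x ∈ B, x ∈ C → B = C
  eq_of_crossing : ∀ B ∈ P, ∀ C ∈ P, ∀ p₁ ∈ B, ∀ q₁ ∈ C, ∀ p₂ ∈ B, ∀ q₂ ∈ C,
    p₁ < q₁ → q₁ < p₂ → p₂ < q₂ → B = C

theorem isNCPartition_singleton (a : α) : IsNCPartition {a} {{a}} where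
  nonempty := by simp
  subset := by simp
  exists_mem := by simp
  eq_of_mem := by simp
  eq_of_crossing := by simp

namespace IsNCPartition

variable {S S' : Finset α} {P P' : Finset (Finset α)}

theorem eq_of_le_crossing (hP : IsNCPartition S P) {B C : Finset α} (hB : B ∈ P) (hC : C ∈ P)
    {p₁ q₁ p₂ q₂ : α} (hp₁ : p₁ ∈ B) (hq₁ : q₁ ∈ C) (hp₂ : p₂ ∈ B) (hq₂ : q₂ ∈ C)
    (h₁ : p₁ ≤ q₁) (h₂ : q₁ ≤ p₂) (h₃ : p₂ ≤ q₂) : B = C := by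
  rcases h₁.eq_or_lt with rfl | h₁
  · exact hP.eq_of_mem B hB C hC _ hp₁ hq₁
  rcases h₂.eq_or_lt with rfl | h₂
  · exact hP.eq_of_mem B hB C hC _ hp₂ hq₁
  rcases h₃.eq_or_lt with rfl | h₃
  · exact hP.eq_of_mem B hB C hC _ hp₂ hq₂
  exact hP.eq_of_crossing B hB C hC p₁ hp₁ q₁ hq₁ p₂ hp₂ q₂ hq₂ h₁ h₂ h₃

theorem disjoint (hP : IsNCPartition S P) (hP' : IsNCPartition S' P') (hS : Disjoint S S') :
    Disjoint P P' := by
  refine disjoint_left.mpr fun B hB hB' => ?_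
  obtain ⟨x, hx⟩ := hP.nonempty B hB
  exact disjoint_left.mp hS (hP.subset B hB hx) (hP'.subset B hB' hx)

theorem union (hP : IsNCPartition S P) (hP' : IsNCPartition S' P') (hS : Disjoint S S')
    (hnest : ∀ x ∈ S', ∀ y ∈ S, ∀ z ∈ S', x < y → y < z → False) :
    IsNCPartition (S ∪ S') (P ∪ P') where
  nonempty B hB := (mem_union.mp hB).elim (hP.nonempty B) (hP'.nonempty B)
  subset B hB := (mem_union.mp hB).elim (fun h => (hP.subset B h).trans subset_union_left)
    (fun h => (hP'.subset B h).trans subset_union_right)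
  exists_mem x hx := (mem_union.mp hx).elim
    (fun h => (hP.exists_mem x h).imp fun _ hB => ⟨mem_union_left _ hB.1, hB.2⟩)
    (fun h => (hP'.exists_mem x h).imp fun _ hB => ⟨mem_union_right _ hB.1, hB.2⟩)
  eq_of_mem B hB C hC x hxB hxC := by
    rcases mem_union.mp hB with hB | hB <;> rcases mem_union.mp hC with hC | hC
    · exact hP.eq_of_mem B hB C hC x hxB hxC
    · exact absurd (hP'.subset C hC hxC) (disjoint_left.mp hS (hP.subset B hB hxB))
    · exact absurd (hP'.subset B hB hxB) (disjoint_left.mp hS (hP.subset C hC hxC))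
    · exact hP'.eq_of_mem B hB C hC x hxB hxC
  eq_of_crossing B hB C hC p₁ hp₁ q₁ hq₁ p₂ hp₂ q₂ hq₂ h₁ h₂ h₃ := by
    rcases mem_union.mp hB with hB | hB <;> rcases mem_union.mp hC with hC | hC
    · exact hP.eq_of_crossing B hB C hC p₁ hp₁ q₁ hq₁ p₂ hp₂ q₂ hq₂ h₁ h₂ h₃
    · exact (hnest q₁ (hP'.subset C hC hq₁) p₂ (hP.subset B hB hp₂) q₂
        (hP'.subset C hC hq₂) h₂ h₃).elim
    · exact (hnest p₁ (hP'.subset B hB hp₁) q₁ (hP.subset C hC hq₁) p₂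
        (hP'.subset B hB hp₂) h₁ h₂).elim
    · exact hP'.eq_of_crossing B hB C hC p₁ hp₁ q₁ hq₁ p₂ hp₂ q₂ hq₂ h₁ h₂ h₃

end IsNCPartition

open scoped Classical in
noncomputable def ncPartitions (S : Finset α) : Finset (Finset (Finset α)) :=
  S.powerset.powerset.filter (IsNCPartition S)

theorem mem_ncPartitions {S : Finset α} {P : Finset (Finset α)} :
    P ∈ ncPartitions S ↔ IsNCPartition S P := by
  simp only [ncPartitions, mem_filter, mem_powerset, and_iff_right_iff_imp]
  exact fun hP B hB => mem_powerset.mpr (hP.subset B hB)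

theorem ncPartitions_empty : ncPartitions (∅ : Finset α) = {∅} := by
  ext P
  rw [mem_ncPartitions, mem_singleton]
  constructor
  · intro hP
    refine eq_empty_of_forall_notMem fun B hB => ?_
    obtain ⟨x, hx⟩ := hP.nonempty B hB
    simpa using hP.subset B hB hx
  · rintro rfl
    exact ⟨by simp, by simp, by simp, by simp, by simp⟩

def blockComap (φ : α → β) (T : Finset α) (P : Finset (Finset β)) : Finset (Finset α) :=
  (P.image fun B => T.filter (φ · ∈ B)).filter Finset.Nonempty

section BlockComap

variable {φ : α → β} {T : Finset α} {S : Finset β} {P P' : Finset (Finset β)}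

theorem mem_blockComap {B : Finset α} :
    B ∈ blockComap φ T P ↔ (∃ C ∈ P, T.filter (φ · ∈ C) = B) ∧ B.Nonempty := by
  simp [blockComap]

theorem blockComap_union : blockComap φ T (P ∪ P') = blockComap φ T P ∪ blockComap φ T P' := by
  simp only [blockComap, image_union, filter_union]

theorem blockComap_empty_left : blockComap φ ∅ P = ∅ := by
  simp [blockComap]

theorem blockComap_eq_empty (h : ∀ B ∈ P, ∀ x ∈ T, φ x ∉ B) : blockComap φ T P = ∅ := by
  ext B
  simp only [mem_blockComap, notMem_empty, iff_false, not_and]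
  rintro ⟨C, hC, rfl⟩ ⟨x, hx⟩
  exact h C hC x (mem_filter.mp hx).1 (mem_filter.mp hx).2

theorem blockComap_congr {ψ : α → β} (h : ∀ x ∈ T, ∀ B ∈ P, φ x ∈ B ↔ ψ x ∈ B) :
    blockComap φ T P = blockComap ψ T P := by
  unfold blockComap
  congr 1
  exact image_congr fun B hB => filter_congr fun x hx => h x hx B hB

theorem blockComap_blockComap {ψ : β → γ} {P : Finset (Finset γ)} (hmaps : Set.MapsTo φ T S) :
    blockComap φ T (blockComap ψ S P) = blockComap (ψ ∘ φ) T P := by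
  have hfilter (C : Finset γ) :
      T.filter (fun x => φ x ∈ S.filter (ψ · ∈ C)) = T.filter (fun x => ψ (φ x) ∈ C) :=
    filter_congr fun x hx => by simp [show φ x ∈ S from hmaps hx]
  ext B
  simp only [mem_blockComap, Function.comp]
  constructor
  · rintro ⟨⟨C', ⟨⟨C, hC, rfl⟩, -⟩, rfl⟩, hne⟩
    exact ⟨⟨C, hC, (hfilter C).symm⟩, hne⟩
  · rintro ⟨⟨C, hC, rfl⟩, x, hx⟩
    refine ⟨⟨_, ⟨⟨C, hC, rfl⟩, φ x, ?_⟩, hfilter C⟩, x, hx⟩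
    simp only [mem_filter] at hx ⊢
    exact ⟨hmaps hx.1, hx.2⟩

theorem IsNCPartition.comap (hP : IsNCPartition S P) (hmaps : Set.MapsTo φ T S)
    (hmono : MonotoneOn φ T) : IsNCPartition T (blockComap φ T P) where
  nonempty B hB := (mem_blockComap.mp hB).2
  subset B hB := by
    obtain ⟨⟨C, -, rfl⟩, -⟩ := mem_blockComap.mp hB
    exact filter_subset _ _
  exists_mem x hx := by
    obtain ⟨C, hC, hxC⟩ := hP.exists_mem (φ x) (hmaps hx)
    exact ⟨_, mem_blockComap.mpr ⟨⟨C, hC, rfl⟩, x, mem_filter.mpr ⟨hx, hxC⟩⟩,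
      mem_filter.mpr ⟨hx, hxC⟩⟩
  eq_of_mem B hB B' hB' x hxB hxB' := by
    obtain ⟨⟨C, hC, rfl⟩, -⟩ := mem_blockComap.mp hB
    obtain ⟨⟨C', hC', rfl⟩, -⟩ := mem_blockComap.mp hB'
    rw [hP.eq_of_mem C hC C' hC' (φ x) (mem_filter.mp hxB).2 (mem_filter.mp hxB').2]
  eq_of_crossing B hB B' hB' p₁ hp₁ q₁ hq₁ p₂ hp₂ q₂ hq₂ h₁ h₂ h₃ := by
    obtain ⟨⟨C, hC, rfl⟩, -⟩ := mem_blockComap.mp hB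
    obtain ⟨⟨C', hC', rfl⟩, -⟩ := mem_blockComap.mp hB'
    simp only [mem_filter] at hp₁ hq₁ hp₂ hq₂
    rw [hP.eq_of_le_crossing hC hC' hp₁.2 hq₁.2 hp₂.2 hq₂.2 (hmono hp₁.1 hq₁.1 h₁.le)
      (hmono hq₁.1 hp₂.1 h₂.le) (hmono hp₂.1 hq₂.1 h₃.le)]

theorem IsNCPartition.prod_blockComap {M : Type*} [CommMonoid M] (hP : IsNCPartition S P)
    (hsurj : Set.SurjOn φ T S) (f : Finset α → M) :
    ∏ B ∈ blockComap φ T P, f B = ∏ B ∈ P, f (T.filter (φ · ∈ B)) := by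
  have hpre {B : Finset β} (hB : B ∈ P) {y : β} (hy : y ∈ B) : ∃ x ∈ T, φ x = y :=
    hsurj (hP.subset B hB hy)
  have himage : blockComap φ T P = P.image fun B => T.filter (φ · ∈ B) := by
    refine filter_true_of_mem fun B' hB' => ?_
    obtain ⟨B, hB, rfl⟩ := mem_image.mp hB'
    obtain ⟨y, hy⟩ := hP.nonempty B hB
    obtain ⟨x, hx, rfl⟩ := hpre hB hy
    exact ⟨x, mem_filter.mpr ⟨hx, hy⟩⟩
  rw [himage, prod_image]
  intro B hB C hC hBC
  obtain ⟨y, hy⟩ := hP.nonempty B hB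
  obtain ⟨x, hx, rfl⟩ := hpre hB hy
  have hxC : x ∈ T.filter (φ · ∈ C) := by
    rw [← show T.filter (φ · ∈ B) = T.filter (φ · ∈ C) from hBC]
    exact mem_filter.mpr ⟨hx, hy⟩
  exact hP.eq_of_mem B hB C hC _ hy (mem_filter.mp hxC).2

end BlockComap

section Restrict

variable {S T T' : Finset α} {P : Finset (Finset α)}

theorem IsNCPartition.blockComap_id (hP : IsNCPartition S P) :
    blockComap (fun x => x) S P = P := by
  ext B
  rw [mem_blockComap]
  constructor
  · rintro ⟨⟨C, hC, rfl⟩, -⟩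
    rwa [filter_mem_eq_inter, inter_eq_right.mpr (hP.subset C hC)]
  · intro hB
    refine ⟨⟨B, hB, ?_⟩, hP.nonempty B hB⟩
    rw [filter_mem_eq_inter, inter_eq_right.mpr (hP.subset B hB)]

theorem IsNCPartition.blockComap_blockComap_of_leftInvOn {U : Finset β} {φ : α → β}
    {ψ : β → α} (hP : IsNCPartition S P) (hmaps : Set.MapsTo φ S U)
    (hinv : Set.LeftInvOn ψ φ S) : blockComap φ S (blockComap ψ U P) = P := by
  rw [blockComap_blockComap hmaps, blockComap_congr fun x hx B _ => by rw [Function.comp, hinv hx],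
    hP.blockComap_id]

theorem IsNCPartition.blockComap_singleton (hP : IsNCPartition S P) {a : α} (ha : a ∈ S) :
    blockComap (fun x => x) {a} P = {{a}} := by
  obtain ⟨C, hC, haC⟩ := hP.exists_mem a ha
  ext B
  simp only [mem_blockComap, mem_singleton]
  constructor
  · rintro ⟨⟨D, -, rfl⟩, hne⟩
    exact hne.subset_singleton_iff.mp (filter_subset _ _)
  · rintro rfl
    exact ⟨⟨C, hC, by simp [haC]⟩, singleton_nonempty a⟩

theorem blockComap_id_union (hne : ∀ B ∈ P, B.Nonempty) (hT : Disjoint T T')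
    (h : ∀ B ∈ P, B ⊆ T ∨ B ⊆ T') :
    blockComap (fun x => x) T P ∪ blockComap (fun x => x) T' P = P := by
  ext B
  simp only [mem_union, mem_blockComap, filter_mem_eq_inter]
  constructor
  · rintro (⟨⟨C, hC, rfl⟩, hne'⟩ | ⟨⟨C, hC, rfl⟩, hne'⟩)
    · rcases h C hC with hCT | hCT'
      · rwa [inter_eq_right.mpr hCT]
      · simp [disjoint_iff_inter_eq_empty.mp (hT.mono_right hCT')] at hne'
    · rcases h C hC with hCT | hCT'
      · simp [disjoint_iff_inter_eq_empty.mp (hT.symm.mono_right hCT)] at hne'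
      · rwa [inter_eq_right.mpr hCT']
  · intro hB
    rcases h B hB with hBT | hBT'
    · exact Or.inl ⟨⟨B, hB, inter_eq_right.mpr hBT⟩, hne B hB⟩
    · exact Or.inr ⟨⟨B, hB, inter_eq_right.mpr hBT'⟩, hne B hB⟩

end Restrict

theorem sum_ncPartitions_prod_card_eq {M : Type*} [CommSemiring M] {T : Finset α} {S : Finset β}
    {φ : α → β} {ψ : β → α} (hφ : Set.MapsTo φ T S) (hψ : Set.MapsTo ψ S T)
    (hψφ : Set.LeftInvOn ψ φ T) (hφψ : Set.LeftInvOn φ ψ S) (hmono : MonotoneOn φ T)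
    (g : ℕ → M) : ∑ P ∈ ncPartitions S, ∏ B ∈ P, g #B = ∑ P ∈ ncPartitions T, ∏ B ∈ P, g #B := by
  have hψmono : MonotoneOn ψ S := fun y₁ hy₁ y₂ hy₂ hy => not_lt.mp fun hlt => by
    have := hmono (hψ hy₂) (hψ hy₁) hlt.le
    rw [hφψ hy₁, hφψ hy₂] at this
    exact hlt.ne (congrArg ψ (le_antisymm hy this)).symm
  refine sum_nbij' (blockComap φ T) (blockComap ψ S) (fun P hP => ?_) (fun P hP => ?_)
    (fun P hP => ?_) (fun P hP => ?_) fun P hP => ?_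
  · exact mem_ncPartitions.mpr ((mem_ncPartitions.mp hP).comap hφ hmono)
  · exact mem_ncPartitions.mpr ((mem_ncPartitions.mp hP).comap hψ hψmono)
  · exact (mem_ncPartitions.mp hP).blockComap_blockComap_of_leftInvOn hψ hφψ
  · exact (mem_ncPartitions.mp hP).blockComap_blockComap_of_leftInvOn hφ hψφ
  · have hP := mem_ncPartitions.mp hP
    rw [hP.prod_blockComap fun y hy => ⟨ψ y, hψ hy, hφψ hy⟩]
    refine prod_congr rfl fun B hB => ?_
    rw [card_filter_mem_of_injOn hψφ.injOn fun y hy => ?_]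
    exact ⟨ψ y, hψ (hP.subset B hB hy), hφψ (hP.subset B hB hy)⟩

section Decomposition

variable {n j : ℕ} {P Q R : Finset (Finset ℕ)}

open scoped Classical in
/-- For a partition `P` of `{0, …, n}`, `innerCard n P + 1` is the second element of the block of
`0`, and `innerCard n P = n` if that block is `{0}`. -/
noncomputable def innerCard (n : ℕ) (P : Finset (Finset ℕ)) : ℕ :=
  Nat.find (⟨n, Or.inl rfl⟩ : ∃ k, k = n ∨ ∃ B ∈ P, 0 ∈ B ∧ k + 1 ∈ B)

theorem innerCard_spec : innerCard n P = n ∨ ∃ B ∈ P, 0 ∈ B ∧ innerCard n P + 1 ∈ B := by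
  classical
  exact Nat.find_spec (⟨n, Or.inl rfl⟩ : ∃ k, k = n ∨ ∃ B ∈ P, 0 ∈ B ∧ k + 1 ∈ B)

theorem innerCard_le : innerCard n P ≤ n := by
  classical
  exact Nat.find_min' _ (Or.inl rfl)

theorem notMem_of_lt_innerCard {k : ℕ} (hk : k < innerCard n P) {B : Finset ℕ} (hB : B ∈ P)
    (h0 : 0 ∈ B) : k + 1 ∉ B := by
  classical
  exact fun hk1 => Nat.find_min _ hk (Or.inr ⟨B, hB, h0, hk1⟩)

theorem innerCard_eq (hj : j ≤ n) (hspec : j = n ∨ ∃ B ∈ P, 0 ∈ B ∧ j + 1 ∈ B)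
    (hmin : ∀ k < j, ∀ B ∈ P, 0 ∈ B → k + 1 ∉ B) : innerCard n P = j := by
  classical
  refine (Nat.find_eq_iff _).mpr ⟨hspec, fun k hk => ?_⟩
  rintro (rfl | ⟨B, hB, h0, hk1⟩)
  · omega
  · exact hmin k hk B hB h0 hk1

theorem IsNCPartition.subset_or_subset (hP : IsNCPartition (range (n + 1)) P) {B : Finset ℕ}
    (hB : B ∈ P) : B ⊆ insert 0 (Ioc (innerCard n P) n) ∨ B ⊆ Ioc 0 (innerCard n P) := by
  set j := innerCard n P
  have hle (x) (hx : x ∈ B) : x ≤ n := Nat.lt_succ_iff.mp (mem_range.mp (hP.subset B hB hx))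
  by_cases h0 : 0 ∈ B
  · refine Or.inl fun x hx => ?_
    rcases Nat.eq_zero_or_pos x with rfl | hpos
    · exact mem_insert_self _ _
    refine mem_insert_of_mem (mem_Ioc.mpr ⟨?_, hle x hx⟩)
    by_contra! hxj
    exact notMem_of_lt_innerCard (n := n) (k := x - 1) (by omega) hB h0
      (by rwa [Nat.sub_add_cancel hpos])
  have hpos (x) (hx : x ∈ B) : 0 < x := Nat.pos_of_ne_zero fun h => h0 (h ▸ hx)
  by_cases hbig : ∃ x ∈ B, j < x
  swap
  · exact Or.inr fun x hx => mem_Ioc.mpr ⟨hpos x hx, not_lt.mp fun h => hbig ⟨x, hx, h⟩⟩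
  obtain ⟨x, hx, hjx⟩ := hbig
  obtain ⟨Z, hZ, h0Z, hjZ⟩ :=
    (innerCard_spec (n := n) (P := P)).resolve_left (by have := hle x hx; omega)
  refine Or.inl fun y hy => mem_insert_of_mem (mem_Ioc.mpr ⟨?_, hle y hy⟩)
  by_contra! hyj
  -- `0 < y < j + 1 ≤ x` would make `B` cross the block of `0`
  exact h0 (hP.eq_of_le_crossing hZ hB h0Z hy hjZ hx (Nat.zero_le y) (by omega) hjx ▸ h0Z)

/-- The truncated subtraction `x ↦ x - (j + 1)` sends both `0` and `j + 1` to `0`. -/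
noncomputable def outerPart (n j : ℕ) (R : Finset (Finset ℕ)) : Finset (Finset ℕ) :=
  if j = n then {{0}} else blockComap (· - (j + 1)) (insert 0 (Ioc j n)) R

noncomputable def innerPart (j : ℕ) (Q : Finset (Finset ℕ)) : Finset (Finset ℕ) :=
  blockComap (· - 1) (Ioc 0 j) Q

noncomputable def glue (n j : ℕ) (Q R : Finset (Finset ℕ)) : Finset (Finset ℕ) :=
  outerPart n j R ∪ innerPart j Q

noncomputable def innerOf (n : ℕ) (P : Finset (Finset ℕ)) : Finset (Finset ℕ) :=
  blockComap (· + 1) (range (innerCard n P)) P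

noncomputable def outerOf (n : ℕ) (P : Finset (Finset ℕ)) : Finset (Finset ℕ) :=
  blockComap (· + (innerCard n P + 1)) (range (n - innerCard n P)) P

theorem disjoint_insert_zero_Ioc_Ioc_zero : Disjoint (insert 0 (Ioc j n)) (Ioc 0 j) := by
  rw [disjoint_left]
  intro x hx hx'
  simp only [mem_insert, mem_Ioc] at hx hx'
  omega

theorem isNCPartition_outerPart (hj : j ≤ n) (hR : IsNCPartition (range (n - j)) R) :
    IsNCPartition (insert 0 (Ioc j n)) (outerPart n j R) := by
  unfold outerPart
  split_ifs with hjn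
  · subst hjn
    simpa using isNCPartition_singleton 0
  · refine hR.comap (fun x hx => ?_) fun x _ y _ hxy => Nat.sub_le_sub_right hxy _
    simp only [coe_insert, coe_Ioc, Set.mem_insert_iff, Set.mem_Ioc, coe_range,
      Set.mem_Iio] at hx ⊢
    omega

theorem isNCPartition_innerPart (hQ : IsNCPartition (range j) Q) :
    IsNCPartition (Ioc 0 j) (innerPart j Q) :=
  hQ.comap (fun x hx => by simp only [coe_Ioc, Set.mem_Ioc, coe_range, Set.mem_Iio] at hx ⊢; omega)
    fun x _ y _ hxy => Nat.sub_le_sub_right hxy _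

theorem isNCPartition_glue (hj : j ≤ n) (hQ : IsNCPartition (range j) Q)
    (hR : IsNCPartition (range (n - j)) R) : IsNCPartition (range (n + 1)) (glue n j Q R) := by
  have hrange : range (n + 1) = insert 0 (Ioc j n) ∪ Ioc 0 j := by
    ext x
    simp only [mem_range, mem_union, mem_insert, mem_Ioc]
    omega
  rw [hrange]
  refine (isNCPartition_outerPart hj hR).union (isNCPartition_innerPart hQ)
    disjoint_insert_zero_Ioc_Ioc_zero fun x hx y hy z hz hxy hyz => ?_
  simp only [mem_insert, mem_Ioc] at hx hy hz
  omega

theorem IsNCPartition.innerOf (hP : IsNCPartition (range (n + 1)) P) :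
    IsNCPartition (range (innerCard n P)) (innerOf n P) := by
  have := innerCard_le (n := n) (P := P)
  refine hP.comap (fun x hx => ?_) fun x _ y _ hxy => Nat.add_le_add_right hxy _
  simp only [coe_range, Set.mem_Iio] at hx ⊢
  omega

theorem IsNCPartition.outerOf (hP : IsNCPartition (range (n + 1)) P) :
    IsNCPartition (range (n - innerCard n P)) (outerOf n P) := by
  have := innerCard_le (n := n) (P := P)
  refine hP.comap (fun x hx => ?_) fun x _ y _ hxy => Nat.add_le_add_right hxy _
  simp only [coe_range, Set.mem_Iio] at hx ⊢
  omega

theorem innerCard_glue (hj : j ≤ n) (hQ : IsNCPartition (range j) Q)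
    (hR : IsNCPartition (range (n - j)) R) : innerCard n (glue n j Q R) = j := by
  refine innerCard_eq hj ?_ fun k hk B hB h0 hk1 => ?_
  · refine or_iff_not_imp_left.mpr fun hjn => ?_
    obtain ⟨C, hC, h0C⟩ := hR.exists_mem 0 (mem_range.mpr (by omega))
    refine ⟨(insert 0 (Ioc j n)).filter (· - (j + 1) ∈ C), mem_union_left _ ?_, ?_, ?_⟩
    · rw [outerPart, if_neg hjn, mem_blockComap]
      exact ⟨⟨C, hC, rfl⟩, 0, by simpa using h0C⟩
    · simpa using h0C
    · simp only [mem_filter, mem_insert, mem_Ioc, Nat.sub_self]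
      exact ⟨by omega, h0C⟩
  · rcases mem_union.mp hB with hB | hB
    · have := (isNCPartition_outerPart hj hR).subset B hB hk1
      simp only [mem_insert, mem_Ioc] at this
      omega
    · have := (isNCPartition_innerPart hQ).subset B hB h0
      simp at this

theorem innerOf_glue (hj : j ≤ n) (hQ : IsNCPartition (range j) Q)
    (hR : IsNCPartition (range (n - j)) R) : innerOf n (glue n j Q R) = Q := by
  rw [innerOf, innerCard_glue hj hQ hR, glue, blockComap_union, blockComap_eq_empty, empty_union,
    innerPart, hQ.blockComap_blockComap_of_leftInvOn]
  · intro x hx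
    simp only [coe_range, Set.mem_Iio, coe_Ioc, Set.mem_Ioc] at hx ⊢
    omega
  · intro x _
    simp
  · intro B hB x hx hxB
    have := (isNCPartition_outerPart hj hR).subset B hB hxB
    simp only [mem_range, mem_insert, mem_Ioc] at hx this
    omega

theorem outerOf_glue (hj : j ≤ n) (hQ : IsNCPartition (range j) Q)
    (hR : IsNCPartition (range (n - j)) R) : outerOf n (glue n j Q R) = R := by
  rw [outerOf, innerCard_glue hj hQ hR]
  by_cases hjn : j = n
  · subst hjn
    have hR0 := mem_ncPartitions.mpr hR
    rw [Nat.sub_self, range_zero, ncPartitions_empty, mem_singleton] at hR0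
    rw [Nat.sub_self, range_zero, blockComap_empty_left, hR0]
  rw [glue, blockComap_union, blockComap_eq_empty (P := innerPart j Q), union_empty, outerPart,
    if_neg hjn, hR.blockComap_blockComap_of_leftInvOn]
  · intro x hx
    simp only [coe_range, Set.mem_Iio, coe_insert, coe_Ioc, Set.mem_insert_iff,
      Set.mem_Ioc] at hx ⊢
    omega
  · intro x _
    simp
  · intro B hB x hx hxB
    have := (isNCPartition_innerPart hQ).subset B hB hxB
    simp only [mem_range, mem_Ioc] at hx this
    omega

theorem glue_innerOf_outerOf (hP : IsNCPartition (range (n + 1)) P) :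
    glue n (innerCard n P) (innerOf n P) (outerOf n P) = P := by
  set j := innerCard n P with hj
  have hinner : innerPart j (innerOf n P) = blockComap (fun x => x) (Ioc 0 j) P := by
    rw [innerPart, innerOf, ← hj, blockComap_blockComap]
    · refine blockComap_congr fun x hx B _ => ?_
      rw [Function.comp, Nat.sub_add_cancel (mem_Ioc.mp hx).1]
    · intro x hx
      simp only [coe_Ioc, Set.mem_Ioc, coe_range, Set.mem_Iio] at hx ⊢
      omega
  have houter : outerPart n j (outerOf n P) = blockComap (fun x => x) (insert 0 (Ioc j n)) P := by
    unfold outerPart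
    split_ifs with hjn
    · rw [hjn, Ioc_self, insert_empty, hP.blockComap_singleton (by simp)]
    obtain ⟨Z, hZ, h0Z, hjZ⟩ := (innerCard_spec (n := n) (P := P)).resolve_left hjn
    rw [outerOf, ← hj, blockComap_blockComap]
    · refine blockComap_congr fun x hx B hB => ?_
      rcases mem_insert.mp hx with rfl | hx
      · rw [Function.comp, Nat.zero_sub, zero_add]
        exact ⟨fun h => hP.eq_of_mem Z hZ B hB _ hjZ h ▸ h0Z,
          fun h => hP.eq_of_mem Z hZ B hB _ h0Z h ▸ hjZ⟩
      · rw [Function.comp, Nat.sub_add_cancel (mem_Ioc.mp hx).1]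
    · intro x hx
      simp only [coe_insert, coe_Ioc, Set.mem_insert_iff, Set.mem_Ioc, coe_range,
        Set.mem_Iio] at hx ⊢
      have := innerCard_le (n := n) (P := P)
      omega
  rw [glue, hinner, houter, blockComap_id_union hP.nonempty disjoint_insert_zero_Ioc_Ioc_zero
    fun B hB => hP.subset_or_subset hB]

theorem sum_ncPartitions_range_succ {M : Type*} [AddCommMonoid M] (n : ℕ)
    (f : Finset (Finset ℕ) → M) :
    ∑ P ∈ ncPartitions (range (n + 1)), f P = ∑ x ∈ (range (n + 1)).sigma fun j =>
      ncPartitions (range j) ×ˢ ncPartitions (range (n - j)), f (glue n x.1 x.2.1 x.2.2) := by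
  symm
  refine sum_nbij' (fun x => glue n x.1 x.2.1 x.2.2)
    (fun P => (⟨innerCard n P, innerOf n P, outerOf n P⟩ :
      (_ : ℕ) × Finset (Finset ℕ) × Finset (Finset ℕ))) ?_ ?_ ?_ ?_ fun _ _ => rfl
  · rintro ⟨j, Q, R⟩ hx
    simp only [mem_sigma, mem_range, mem_product, mem_ncPartitions] at hx ⊢
    exact isNCPartition_glue (by omega) hx.2.1 hx.2.2
  · intro P hP
    simp only [mem_sigma, mem_range, mem_product, mem_ncPartitions] at hP ⊢
    exact ⟨Nat.lt_succ_of_le innerCard_le, hP.innerOf, hP.outerOf⟩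
  · rintro ⟨j, Q, R⟩ hx
    simp only [mem_sigma, mem_range, mem_product, mem_ncPartitions] at hx
    have hj : j ≤ n := by omega
    simp only [innerCard_glue hj hx.2.1 hx.2.2, innerOf_glue hj hx.2.1 hx.2.2,
      outerOf_glue hj hx.2.1 hx.2.2]
  · intro P hP
    exact glue_innerOf_outerOf (mem_ncPartitions.mp hP)

end Decomposition

section Moments

variable {K : Type*} [CommSemiring K] (c : ℕ → K)

noncomputable def ncMoment (n : ℕ) : K :=
  ∑ P ∈ ncPartitions (range n), ∏ B ∈ P, c #B

noncomputable def markedWeight (s : ℕ) (P : Finset (Finset ℕ)) : K :=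
  ∏ B ∈ P, c (if 0 ∈ B then s + #B else #B)

noncomputable def markedMoment (s n : ℕ) : K :=
  if n = 0 then c s else ∑ P ∈ ncPartitions (range n), markedWeight c s P

variable {c} {n j : ℕ} {Q R : Finset (Finset ℕ)}

theorem markedWeight_glue (s : ℕ) (hj : j ≤ n) (hQ : IsNCPartition (range j) Q)
    (hR : IsNCPartition (range (n - j)) R) :
    markedWeight c s (glue n j Q R) = markedWeight c s (outerPart n j R) * ∏ B ∈ Q, c #B := by
  have hdisj := (isNCPartition_outerPart hj hR).disjoint (isNCPartition_innerPart hQ)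
    disjoint_insert_zero_Ioc_Ioc_zero
  rw [markedWeight, glue, prod_union hdisj, innerPart, hQ.prod_blockComap]
  · congr 1
    refine prod_congr rfl fun B hB => ?_
    rw [if_neg (by simp), card_filter_mem_of_injOn]
    · intro x hx y hy hxy
      simp only [coe_Ioc, Set.mem_Ioc] at hx hy hxy
      omega
    · intro y hy
      exact ⟨y + 1, by simpa using hQ.subset B hB hy, by simp⟩
  · intro y hy
    exact ⟨y + 1, by simpa using hy, by simp⟩

theorem sum_markedWeight_outerPart (s : ℕ) (hj : j ≤ n) :
    ∑ R ∈ ncPartitions (range (n - j)), markedWeight c s (outerPart n j R) =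
      markedMoment c (s + 1) (n - j) := by
  by_cases hjn : j = n
  · subst hjn
    simp [outerPart, markedMoment, ncPartitions_empty, markedWeight]
  rw [markedMoment, if_neg (by omega)]
  refine sum_congr rfl fun R hR => ?_
  replace hR := mem_ncPartitions.mp hR
  rw [outerPart, if_neg hjn, markedWeight, hR.prod_blockComap, markedWeight]
  · refine prod_congr rfl fun B hB => ?_
    have hcard : #((Ioc j n).filter (· - (j + 1) ∈ B)) = #B := by
      refine card_filter_mem_of_injOn (fun x hx y hy hxy => ?_) fun y hy => ⟨y + (j + 1), ?_, ?_⟩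
      · simp only [coe_Ioc, Set.mem_Ioc] at hx hy hxy
        omega
      · have := mem_range.mp (hR.subset B hB hy)
        simp only [coe_Ioc, Set.mem_Ioc]
        omega
      · simp
    have h0 : 0 ∉ (Ioc j n).filter (· - (j + 1) ∈ B) := by simp
    rw [filter_insert, Nat.zero_sub]
    by_cases hB0 : 0 ∈ B
    · rw [if_pos hB0, if_pos (mem_insert_self _ _), card_insert_of_notMem h0, hcard, if_pos hB0,
        add_right_comm, add_assoc]
    · rw [if_neg hB0, if_neg h0, hcard, if_neg hB0]
  · intro y hy
    refine ⟨y + (j + 1), ?_, by simp⟩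
    simp only [coe_range, Set.mem_Iio] at hy
    simp only [coe_insert, coe_Ioc, Set.mem_insert_iff, Set.mem_Ioc]
    omega

theorem markedMoment_succ (s n : ℕ) : markedMoment c s (n + 1) =
    ∑ j ∈ range (n + 1), ncMoment c j * markedMoment c (s + 1) (n - j) := by
  rw [markedMoment, if_neg n.succ_ne_zero, sum_ncPartitions_range_succ, sum_sigma]
  refine sum_congr rfl fun j hj => ?_
  have hj : j ≤ n := Nat.lt_succ_iff.mp (mem_range.mp hj)
  rw [ncMoment, ← sum_markedWeight_outerPart s hj, sum_mul_sum, sum_product]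
  refine sum_congr rfl fun Q hQ => sum_congr rfl fun R hR => ?_
  rw [markedWeight_glue s hj (mem_ncPartitions.mp hQ) (mem_ncPartitions.mp hR), mul_comm]

variable (c)

theorem ncMoment_zero : ncMoment c 0 = 1 := by
  simp [ncMoment, ncPartitions_empty]

theorem markedMoment_zero_left (hn : n ≠ 0) : markedMoment c 0 n = ncMoment c n := by
  simp [markedMoment, hn, markedWeight, ncMoment]

end Moments

theorem mem_NCPartitions_iff {n : ℕ} {P : Finset (Finset (Fin n))} :
    P ∈ NCPartitions n ↔ IsNCPartition univ P := by
  simp only [NCPartitions, mem_filter, mem_univ, true_and]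
  constructor
  · rintro ⟨hne, hunique, hnc⟩
    refine ⟨hne, fun _ _ => subset_univ _, fun x _ => (hunique x).exists,
      fun B hB C hC x hxB hxC => (hunique x).unique ⟨hB, hxB⟩ ⟨hC, hxC⟩, ?_⟩
    intro B hB C hC p₁ hp₁ q₁ hq₁ p₂ hp₂ q₂ hq₂ h₁ h₂ h₃
    by_contra hBC
    refine hnc ⟨p₁, q₁, p₂, q₂, h₁, h₂, h₃, ⟨B, hB, hp₁, hp₂⟩, ⟨C, hC, hq₁, hq₂⟩, ?_⟩
    rintro ⟨D, hD, hq₁D, hp₂D⟩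
    exact hBC (((hunique p₂).unique ⟨hB, hp₂⟩ ⟨hD, hp₂D⟩).trans
      ((hunique q₁).unique ⟨hD, hq₁D⟩ ⟨hC, hq₁⟩))
  · intro hP
    refine ⟨hP.nonempty, fun x => ?_, ?_⟩
    · obtain ⟨B, hB, hxB⟩ := hP.exists_mem x (mem_univ x)
      exact ⟨B, ⟨hB, hxB⟩, fun C hC => hP.eq_of_mem C hC.1 B hB x hC.2 hxB⟩
    · rintro ⟨p₁, q₁, p₂, q₂, h₁, h₂, h₃, ⟨B, hB, hp₁, hp₂⟩, ⟨C, hC, hq₁, hq₂⟩, hno⟩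
      exact hno ⟨B, hB, hP.eq_of_crossing B hB C hC p₁ hp₁ q₁ hq₁ p₂ hp₂ q₂ hq₂ h₁ h₂ h₃ ▸ hq₁,
        hp₂⟩

theorem sum_NCPartitions_eq_ncMoment {K : Type*} [CommSemiring K] (c : ℕ → K) {n : ℕ}
    (hn : 1 ≤ n) : ∑ P ∈ NCPartitions n, ∏ B ∈ P, c #B = ncMoment c n := by
  have hNC : NCPartitions n = ncPartitions univ := by
    ext P
    rw [mem_NCPartitions_iff, mem_ncPartitions]
  rw [hNC, ncMoment, sum_ncPartitions_prod_card_eq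
    (φ := fun x => (⟨min x (n - 1), by omega⟩ : Fin n)) (ψ := Fin.val)]
  · intro x _
    simp
  · intro x _
    simp
  · intro x hx
    simp only [coe_range, Set.mem_Iio] at hx
    simp only
    omega
  · intro x _
    ext
    simp only
    omega
  · intro x _ y _ h
    simp only [Fin.mk_le_mk]
    omega

section Series

open PowerSeries

variable {K : Type*} [CommRing K]

theorem eq_of_forall_X_pow_dvd_sub {f g : K⟦X⟧} (h : ∀ n, X ^ n ∣ f - g) : f = g := by
  ext n
  simpa [sub_eq_zero] using X_pow_dvd_iff.mp (h (n + 1)) n (Nat.lt_succ_self n)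

theorem eq_of_forall_eq_C_add_X_mul_mul {A : K⟦X⟧} {c : ℕ → K} {F G : ℕ → K⟦X⟧}
    (hF : ∀ s, F s = C (c s) + X * A * F (s + 1))
    (hG : ∀ s, G s = C (c s) + X * A * G (s + 1)) : F = G := by
  have hdvd (n : ℕ) : ∀ s, X ^ n ∣ F s - G s := by
    induction n with
    | zero => simp
    | succ n ih =>
      intro s
      rw [hF, hG, show C (c s) + X * A * F (s + 1) - (C (c s) + X * A * G (s + 1)) =
        X * (A * (F (s + 1) - G (s + 1))) by ring, pow_succ']
      exact mul_dvd_mul_left X ((ih _).mul_left A)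
  exact funext fun s => eq_of_forall_X_pow_dvd_sub fun n => hdvd n s

theorem subst_X_mul_mk_add (A : K⟦X⟧) (c : ℕ → K) (s : ℕ) :
    (PowerSeries.mk fun k => c (s + k)).subst (X * A) =
      C (c s) + X * A * (PowerSeries.mk fun k => c (s + 1 + k)).subst (X * A) := by
  have hshift : PowerSeries.mk (fun k => c (s + k)) =
      C (c s) + X * PowerSeries.mk (fun k => c (s + 1 + k)) := by
    ext (_ | n)
    · simp
    · simp [coeff_succ_X_mul, add_right_comm _ 1, ← add_assoc]
  have ha : HasSubst (X * A) := HasSubst.of_constantCoeff_zero' (by simp)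
  rw [hshift, subst_add ha, subst_mul ha, subst_C, subst_X ha]
  rfl

def tailSeries (m : ℕ → K) : K⟦X⟧ := PowerSeries.mk fun n => if n = 0 then 0 else m n

theorem tailSeries_eq_tailSeries_iff {m m' : ℕ → K} :
    tailSeries m = tailSeries m' ↔ ∀ n, 1 ≤ n → m n = m' n := by
  constructor
  · intro h n hn
    simpa [tailSeries, Nat.one_le_iff_ne_zero.mp hn] using congrArg (coeff n) h
  · intro h
    ext n
    by_cases hn : n = 0
    · simp [tailSeries, hn]
    · simp [tailSeries, hn, h n (Nat.one_le_iff_ne_zero.mpr hn)]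

variable (c : ℕ → K)

theorem mk_markedMoment (s : ℕ) : PowerSeries.mk (markedMoment c s) =
    C (c s) + X * PowerSeries.mk (ncMoment c) * PowerSeries.mk (markedMoment c (s + 1)) := by
  ext (_ | n)
  · simp [markedMoment]
  · rw [coeff_mk, markedMoment_succ, map_add, coeff_C, if_neg n.succ_ne_zero, zero_add, mul_assoc,
      coeff_succ_X_mul, coeff_mul, Nat.sum_antidiagonal_eq_sum_range_succ_mk]
    simp

theorem mk_markedMoment_eq_subst (s : ℕ) : PowerSeries.mk (markedMoment c s) =
    (PowerSeries.mk fun k => c (s + k)).subst (X * PowerSeries.mk (ncMoment c)) :=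
  congr_fun (eq_of_forall_eq_C_add_X_mul_mul (mk_markedMoment c)
    (subst_X_mul_mk_add (PowerSeries.mk (ncMoment c)) c)) s

theorem tailSeries_ncMoment :
    tailSeries (ncMoment c) = (tailSeries c).subst (X * (1 + tailSeries (ncMoment c))) := by
  have hA : 1 + tailSeries (ncMoment c) = PowerSeries.mk (ncMoment c) := by
    ext (_ | n) <;> simp [tailSeries, ncMoment_zero, coeff_one]
  have hH : PowerSeries.mk (markedMoment c 0) = C (c 0) + tailSeries (ncMoment c) := by
    ext (_ | n)
    · simp [tailSeries, markedMoment]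
    · simp [tailSeries, markedMoment_zero_left c n.succ_ne_zero]
  have hC : PowerSeries.mk (fun k => c (0 + k)) = C (c 0) + tailSeries c := by
    ext (_ | n) <;> simp [tailSeries]
  have ha : HasSubst (X * (1 + tailSeries (ncMoment c))) :=
    HasSubst.of_constantCoeff_zero' (by simp)
  have := mk_markedMoment_eq_subst c 0
  rw [hH, hC, ← hA, subst_add ha, subst_C] at this
  exact add_left_cancel this

end Series

section Composition

open PowerSeries

theorem pscomp_eq_subst (f g : ℂ⟦X⟧) (hg : constantCoeff g = 0) : pscomp f g = f.subst g := by
  ext n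
  rw [pscomp, coeff_mk, coeff_subst' (HasSubst.of_constantCoeff_zero' hg),
    finsum_eq_sum_of_support_subset _ (s := range (n + 1))]
  · simp [smul_eq_mul]
  · intro k hk
    by_contra h
    simp only [coe_range, Set.mem_Iio, not_lt] at h
    apply hk
    have : X ^ k ∣ g ^ k := pow_dvd_pow_of_dvd (X_dvd_iff.mpr hg) k
    simp [X_pow_dvd_iff.mp this n (by omega)]

theorem X_pow_dvd_pscomp_sub (f : ℂ⟦X⟧) {g g' : ℂ⟦X⟧} {n : ℕ} (h : X ^ n ∣ g - g') :
    X ^ n ∣ pscomp f g - pscomp f g' := by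
  refine X_pow_dvd_iff.mpr fun m hm => ?_
  simp only [pscomp, map_sub, coeff_mk, ← sum_sub_distrib, ← mul_sub]
  refine sum_eq_zero fun k _ => ?_
  rw [← map_sub, X_pow_dvd_iff.mp (h.trans (sub_dvd_pow_sub_pow g g' k)) m hm, mul_zero]

theorem eq_of_eq_pscomp {f M N : ℂ⟦X⟧} (hM : M = pscomp f (X * (1 + M)))
    (hN : N = pscomp f (X * (1 + N))) : M = N := by
  refine eq_of_forall_X_pow_dvd_sub fun n => ?_
  induction n with
  | zero => simp
  | succ n ih =>
    rw [hM, hN]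
    refine X_pow_dvd_pscomp_sub f ?_
    rw [← mul_sub, add_sub_add_left_eq_sub, pow_succ']
    exact mul_dvd_mul_left X ih

theorem tailSeries_ncMoment_eq_pscomp (c : ℕ → ℂ) :
    tailSeries (ncMoment c) = pscomp (tailSeries c) (X * (1 + tailSeries (ncMoment c))) := by
  rw [pscomp_eq_subst _ _ (by simp)]
  exact tailSeries_ncMoment c

end Composition

end NonCrossing

/-- The moment-cumulant relation over non-crossing partitions holds for the sequences
`m` (moments) and `c` (free cumulants) if and only if the moment series
`M(z) = Σ_{n≥1} mₙ zⁿ` and the cumulant series `C(z) = Σ_{n≥1} cₙ zⁿ` satisfy the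
functional equation `M(z) = C(z·(1 + M(z)))` (the formal form of `G(G⁻¹(z)) = z` for
the Cauchy transform `G` and the `R`-transform). -/
theorem moment_cumulant_iff_functional_equation (m c : ℕ → ℂ) :
    (∀ n, 1 ≤ n →
      m n = ∑ P ∈ NCPartitions n, ∏ B ∈ P, c B.card) ↔
    (PowerSeries.mk fun n => if n = 0 then 0 else m n) =
      pscomp (PowerSeries.mk fun n => if n = 0 then 0 else c n)
        (PowerSeries.X * (1 + PowerSeries.mk fun n => if n = 0 then 0 else m n)) := by
  have hfix := NonCrossing.tailSeries_ncMoment_eq_pscomp c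
  have hmoments : (∀ n, 1 ≤ n → m n = ∑ P ∈ NCPartitions n, ∏ B ∈ P, c B.card) ↔
      NonCrossing.tailSeries m = NonCrossing.tailSeries (NonCrossing.ncMoment c) := by
    rw [NonCrossing.tailSeries_eq_tailSeries_iff]
    exact forall₂_congr fun n hn => by rw [NonCrossing.sum_NCPartitions_eq_ncMoment c hn]
  change _ ↔ NonCrossing.tailSeries m =
    pscomp (NonCrossing.tailSeries c) (PowerSeries.X * (1 + NonCrossing.tailSeries m))
  rw [hmoments]
  exact ⟨fun h => h ▸ hfix, fun h => NonCrossing.eq_of_eq_pscomp h hfix⟩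
end

section
/- For a distribution μ with μ(1)=1 and μ(X) ≠ 0, the S-transform defined from moments, S_μ(z) = ((1+z)/z)·M_μ⁻¹(z) with M_μ(z) = Σ_{n≥1}mₙzⁿ, equals the S-transform defined from cumulants, S_μ(z) = R_μ⁻¹(z)/z with R_μ(z) = Σ_{n≥1}kₙzⁿ, where ⁻¹ denotes compositional inverse. -/
open Finset PowerSeries

section Composition

variable {R : Type*}

theorem PowerSeries.coeff_pow_eq_zero_of_lt [CommSemiring R] {g : PowerSeries R}
    (hg : constantCoeff g = 0) {n k : ℕ} (h : n < k) : coeff n (g ^ k) = 0 :=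
  coeff_of_lt_order _ <| (Nat.cast_lt.2 h).trans_le <| le_order_pow_of_constantCoeff_eq_zero _ hg

theorem PowerSeries.coeff_subst_eq_sum_range [CommRing R] {g : PowerSeries R}
    (hg : constantCoeff g = 0) (f : PowerSeries R) (n : ℕ) :
    coeff n (subst g f) = ∑ k ∈ range (n + 1), coeff k f * coeff n (g ^ k) := by
  rw [coeff_subst' (.of_constantCoeff_zero' hg)]
  refine finsum_eq_sum_of_support_subset _ fun k hk => ?_
  by_contra hkn
  simp only [coe_range, Set.mem_Iio, not_lt] at hkn
  exact hk (by simp [coeff_pow_eq_zero_of_lt hg (Nat.lt_of_succ_le hkn)])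

theorem pscomp_eq_subst {g : PowerSeries ℂ} (hg : constantCoeff g = 0) (f : PowerSeries ℂ) :
    pscomp f g = subst g f := by
  ext n
  rw [pscomp, coeff_mk, coeff_subst_eq_sum_range hg]

end Composition

namespace Finset

theorem sum_powersetCard_succ_Ioi {α M : Type*} [LinearOrder α] [LocallyFiniteOrderTop α]
    [AddCommMonoid M] (t : α) (k : ℕ) (f : Finset α → M) :
    ∑ B ∈ (Ioi t).powersetCard (k + 1), f B =
      ∑ t' ∈ Ioi t, ∑ B ∈ (Ioi t').powersetCard k, f (insert t' B) := by
  have hle : ∀ {s : α} {C : Finset α}, C ⊆ Ioi s → ∀ y ∈ insert s C, s ≤ y := fun hC y hy =>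
    (mem_insert.1 hy).elim ge_of_eq fun hy => (mem_Ioi.1 (hC hy)).le
  rw [sum_sigma']
  refine (sum_bij (fun p _ => insert p.1 p.2) ?_ ?_ ?_ fun _ _ => rfl).symm
  · rintro ⟨t', B⟩ hp
    obtain ⟨htt', hB⟩ := mem_sigma.1 hp
    rw [mem_powersetCard] at hB ⊢
    refine ⟨insert_subset htt' (hB.1.trans (Ioi_subset_Ioi (mem_Ioi.1 htt').le)), ?_⟩
    rw [card_insert_of_notMem fun h => notMem_Ioi_self (hB.1 h), hB.2]
  · rintro ⟨t₁, B₁⟩ hp₁ ⟨t₂, B₂⟩ hp₂ (h : insert t₁ B₁ = insert t₂ B₂)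
    have hB₁ : B₁ ⊆ Ioi t₁ := (mem_powersetCard.1 (mem_sigma.1 hp₁).2).1
    have hB₂ : B₂ ⊆ Ioi t₂ := (mem_powersetCard.1 (mem_sigma.1 hp₂).2).1
    obtain rfl : t₁ = t₂ := le_antisymm (hle hB₁ t₂ (h ▸ mem_insert_self _ _))
      (hle hB₂ t₁ (h ▸ mem_insert_self _ _))
    rw [← erase_insert fun h => notMem_Ioi_self (hB₁ h), h,
      erase_insert fun h => notMem_Ioi_self (hB₂ h)]
  · intro B hB
    obtain ⟨hBt, hcard⟩ := mem_powersetCard.1 hB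
    have hne : B.Nonempty := card_pos.1 (by omega)
    refine ⟨⟨B.min' hne, B.erase (B.min' hne)⟩, mem_sigma.2 ⟨hBt (B.min'_mem hne), ?_⟩,
      insert_erase (B.min'_mem hne)⟩
    refine mem_powersetCard.2 ⟨fun y hy => ?_, by simp [card_erase_of_mem (B.min'_mem hne), hcard]⟩
    obtain ⟨hy, hyB⟩ := mem_erase.1 hy
    exact mem_Ioi.2 ((B.min'_le y hyB).lt_of_ne' hy)

theorem sum_filter_mem_eq_sum_powerset_Ioi {α M : Type*} [LinearOrder α] [Fintype α]
    [LocallyFiniteOrderTop α] [AddCommMonoid M] {z : α} (hz : IsBot z) (f : Finset α → M) :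
    ∑ B ∈ univ.filter (z ∈ ·), f B = ∑ B ∈ (Ioi z).powerset, f (insert z B) := by
  refine sum_nbij' (fun B => B.erase z) (insert z) ?_ ?_ ?_ ?_ ?_
  · intro B _
    exact mem_powerset.2 fun y hy => mem_Ioi.2 ((hz y).lt_of_ne' (mem_erase.1 hy).1)
  · intro B _
    exact mem_filter.2 ⟨mem_univ _, mem_insert_self _ _⟩
  · intro B hB
    exact insert_erase (mem_filter.1 hB).2
  · intro B hB
    exact erase_insert fun h => notMem_Ioi_self (mem_powerset.1 hB h)
  · intro B hB
    rw [insert_erase (mem_filter.1 hB).2]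

variable {α : Type*} [LinearOrder α] [Fintype α] {B S : Finset α} {t t' w x y : α}

/-- For the last point of `B` the gap runs to the end of `α`. -/
def gap (B : Finset α) (x : α) : Finset α :=
  univ.filter fun y => x < y ∧ ∀ z ∈ B, x < z → y < z

theorem mem_gap : y ∈ B.gap x ↔ x < y ∧ ∀ z ∈ B, x < z → y < z := by
  simp [gap]

theorem notMem_of_mem_gap (hy : y ∈ B.gap x) : y ∉ B := fun hyB =>
  ((mem_gap.1 hy).2 y hyB (mem_gap.1 hy).1).false

theorem pairwiseDisjoint_gap (B : Finset α) : (B : Set α).PairwiseDisjoint B.gap := by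
  intro x hx x' hx' hne
  refine disjoint_left.2 fun y hy hy' => ?_
  rw [mem_gap] at hy hy'
  rcases hne.lt_or_gt with h | h
  · exact (hy.2 x' hx' h).asymm hy'.1
  · exact (hy'.2 x hx h).asymm hy.1

theorem eq_of_mem_gap_of_mem_gap {x x' : B} (hx : w ∈ B.gap x) (hx' : w ∈ B.gap x') : x = x' :=
  Subtype.ext <| B.pairwiseDisjoint_gap.elim_finset x.2 x'.2 w hx hx'

theorem ordConnected_gap (B : Finset α) (x : α) : (B.gap x : Set α).OrdConnected := by
  refine ⟨fun y₁ hy₁ y₂ hy₂ w ⟨hw₁, hw₂⟩ => ?_⟩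
  rw [mem_coe, mem_gap] at hy₁ hy₂ ⊢
  exact ⟨hy₁.1.trans_le hw₁, fun z hz hxz => hw₂.trans_lt (hy₂.2 z hz hxz)⟩

/-- The gap is the one after the largest point of `B` below `w`. -/
theorem exists_mem_gap (hw : w ∉ B) (hex : ∃ x ∈ B, x < w) : ∃ x ∈ B, w ∈ B.gap x := by
  have hne : (B.filter (· < w)).Nonempty := by
    obtain ⟨x, hx, hxw⟩ := hex
    exact ⟨x, mem_filter.2 ⟨hx, hxw⟩⟩
  obtain ⟨hxB, hxw⟩ := mem_filter.1 ((B.filter (· < w)).max'_mem hne)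
  refine ⟨_, hxB, mem_gap.2 ⟨hxw, fun z hz hxz => lt_of_not_ge fun hzw => hxz.not_ge ?_⟩⟩
  exact le_max' _ z (mem_filter.2 ⟨hz, hzw.lt_of_ne fun h => hw (h ▸ hz)⟩)

theorem gap_insert_of_lt (h : t < x) : (insert t B).gap x = B.gap x := by
  ext y
  simp only [mem_gap, mem_insert, forall_eq_or_imp, h.not_gt, false_imp_iff, true_and]

theorem gap_singleton [LocallyFiniteOrderTop α] (t : α) : ({t} : Finset α).gap t = Ioi t := by
  ext y
  simp only [mem_gap, mem_singleton, forall_eq, lt_irrefl, false_imp_iff, and_true, mem_Ioi]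

theorem gap_insert_insert [LocallyFiniteOrder α] [LocallyFiniteOrderTop α] (h : t < t')
    (hB : B ⊆ Ioi t') : (insert t (insert t' B)).gap t = Ioo t t' := by
  ext y
  simp only [mem_gap, mem_insert, forall_eq_or_imp, lt_irrefl, false_imp_iff, true_and, mem_Ioo]
  refine and_congr_right fun _ => ⟨fun hy => hy.1 h, fun hyt' => ⟨fun _ => hyt', fun z hz _ => ?_⟩⟩
  exact hyt'.trans (mem_Ioi.1 (hB hz))

/-- Identifies the gap with `Fin` of its size, where `NCPartitions` lives. -/
def gapEmb (B : Finset α) (x : α) : Fin (B.gap x).card ↪o α :=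
  (B.gap x).orderEmbOfFin rfl

theorem gapEmb_mem_gap (i : Fin (B.gap x).card) : B.gapEmb x i ∈ B.gap x :=
  orderEmbOfFin_mem _ _ i

theorem map_univ_gapEmb : univ.map (B.gapEmb x).toEmbedding = B.gap x := by
  ext y
  simp [gapEmb]

theorem exists_gapEmb_eq (hy : y ∈ B.gap x) : ∃ i, B.gapEmb x i = y := by
  rw [← map_univ_gapEmb] at hy
  simpa using hy

def mapGap (B : Finset α) (x : α) : Finset (Fin (B.gap x).card) ↪ Finset α :=
  (mapEmbedding (B.gapEmb x).toEmbedding).toEmbedding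

noncomputable def comapGap (B : Finset α) (x : α) (S : Finset α) : Finset (Fin (B.gap x).card) :=
  S.preimage (B.gapEmb x) (B.gapEmb x).injective.injOn

theorem mem_mapGap {b : Finset (Fin (B.gap x).card)} :
    y ∈ B.mapGap x b ↔ ∃ i ∈ b, B.gapEmb x i = y :=
  mem_map

theorem gapEmb_mem_mapGap {b : Finset (Fin (B.gap x).card)} {i : Fin (B.gap x).card} :
    B.gapEmb x i ∈ B.mapGap x b ↔ i ∈ b :=
  mem_map' _

theorem mem_comapGap {i : Fin (B.gap x).card} : i ∈ B.comapGap x S ↔ B.gapEmb x i ∈ S :=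
  mem_preimage

theorem mapGap_subset_gap (b : Finset (Fin (B.gap x).card)) : B.mapGap x b ⊆ B.gap x := by
  intro y hy
  obtain ⟨i, -, rfl⟩ := mem_mapGap.1 hy
  exact gapEmb_mem_gap i

theorem eq_of_mapGap_subset_gap {x x' : B} {b : Finset (Fin (B.gap x).card)} (hb : b.Nonempty)
    (h : B.mapGap x b ⊆ B.gap x') : x = x' := by
  obtain ⟨i, hi⟩ := hb
  exact eq_of_mem_gap_of_mem_gap (gapEmb_mem_gap i) (h (gapEmb_mem_mapGap.2 hi))

theorem comapGap_mapGap (b : Finset (Fin (B.gap x).card)) : B.comapGap x (B.mapGap x b) = b :=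
  preimage_map _ b

theorem mapGap_comapGap (hS : S ⊆ B.gap x) : B.mapGap x (B.comapGap x S) = S := by
  rw [← map_univ_gapEmb, subset_map_iff] at hS
  obtain ⟨b, -, rfl⟩ := hS
  exact congrArg (B.mapGap x) (comapGap_mapGap b)

end Finset

theorem mem_NCPartitions {n : ℕ} {P : Finset (Finset (Fin n))} :
    P ∈ NCPartitions n ↔
      (∀ B ∈ P, B.Nonempty) ∧
      (∀ x : Fin n, ∃! B, B ∈ P ∧ x ∈ B) ∧
      ¬∃ p₁ q₁ p₂ q₂ : Fin n, p₁ < q₁ ∧ q₁ < p₂ ∧ p₂ < q₂ ∧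
        (∃ B ∈ P, p₁ ∈ B ∧ p₂ ∈ B) ∧ (∃ B ∈ P, q₁ ∈ B ∧ q₂ ∈ B) ∧
        ¬∃ B ∈ P, q₁ ∈ B ∧ p₂ ∈ B := by
  unfold NCPartitions
  exact (@mem_filter _ _ (Classical.decPred _) _ _).trans (and_iff_right (mem_univ P))

theorem NCPartitions_zero : NCPartitions 0 = {∅} := by
  ext P
  rw [mem_NCPartitions, mem_singleton]
  constructor
  · rintro ⟨hne, -, -⟩
    exact eq_empty_of_forall_notMem fun B hB => (hne B hB).elim fun x _ => x.elim0
  · rintro rfl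
    exact ⟨by simp, fun x => x.elim0, fun ⟨p, _⟩ => p.elim0⟩

namespace NCPartitions

variable {n : ℕ} {P : Finset (Finset (Fin n))} {B B' B₀ : Finset (Fin n)} {w x y z : Fin n}
  {g : ∀ x : B₀, Finset (Finset (Fin (B₀.gap x).card))}

theorem eq_of_mem_of_mem (hP : P ∈ NCPartitions n) (hB : B ∈ P) (hB' : B' ∈ P)
    (hw : w ∈ B) (hw' : w ∈ B') : B = B' :=
  ((mem_NCPartitions.1 hP).2.1 w).unique ⟨hB, hw⟩ ⟨hB', hw'⟩

theorem eq_of_crossing (hP : P ∈ NCPartitions n) {p₁ q₁ p₂ q₂ : Fin n}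
    (h₁ : p₁ < q₁) (h₂ : q₁ < p₂) (h₃ : p₂ < q₂) (hB : B ∈ P) (hp₁ : p₁ ∈ B)
    (hp₂ : p₂ ∈ B) (hB' : B' ∈ P) (hq₁ : q₁ ∈ B') (hq₂ : q₂ ∈ B') : B = B' := by
  by_contra hne
  refine (mem_NCPartitions.1 hP).2.2 ⟨p₁, q₁, p₂, q₂, h₁, h₂, h₃,
    ⟨B, hB, hp₁, hp₂⟩, ⟨B', hB', hq₁, hq₂⟩, fun ⟨B'', hB'', hq₁'', hp₂''⟩ => hne ?_⟩
  rw [eq_of_mem_of_mem hP hB hB'' hp₂ hp₂'', eq_of_mem_of_mem hP hB'' hB' hq₁'' hq₁]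

/-- If `u` is the least point of `B` and lies in the gap after `x`, a point `v` of `B` beyond the
next point `y` of `B₀` would make `x < u < y < v` a crossing. -/
theorem exists_subset_gap (hP : P ∈ NCPartitions n) (hz : IsBot z) (hB₀ : B₀ ∈ P)
    (hzB₀ : z ∈ B₀) (hB : B ∈ P) (hne : B ≠ B₀) : ∃ x ∈ B₀, B ⊆ B₀.gap x := by
  have hdisj : ∀ w ∈ B, w ∉ B₀ := fun w hw hw₀ => hne (eq_of_mem_of_mem hP hB hB₀ hw hw₀)
  obtain ⟨u, huB, hu⟩ := B.exists_min_image id ((mem_NCPartitions.1 hP).1 B hB)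
  obtain ⟨x, hx, hux⟩ :=
    exists_mem_gap (hdisj u huB) ⟨z, hzB₀, (hz u).lt_of_ne fun h => hdisj u huB (h ▸ hzB₀)⟩
  refine ⟨x, hx, fun v hv => mem_gap.2 ⟨(mem_gap.1 hux).1.trans_le (hu v hv), fun y hy hxy => ?_⟩⟩
  refine lt_of_not_ge fun hyv => hne ?_
  exact (eq_of_crossing hP (mem_gap.1 hux).1 ((mem_gap.1 hux).2 y hy hxy)
    (hyv.lt_of_ne fun h => hdisj v hv (h ▸ hy)) hB₀ hx hy hB huB hv).symm

theorem subset_gap_of_mem_gap (hP : P ∈ NCPartitions n) (hz : IsBot z) (hB₀ : B₀ ∈ P)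
    (hzB₀ : z ∈ B₀) (hB : B ∈ P) (hx : x ∈ B₀) (hyB : y ∈ B) (hy : y ∈ B₀.gap x) :
    B ⊆ B₀.gap x := by
  have hne : B ≠ B₀ := fun h => notMem_of_mem_gap hy (h ▸ hyB)
  obtain ⟨x', hx', hBx'⟩ := exists_subset_gap hP hz hB₀ hzB₀ hB hne
  rwa [B₀.pairwiseDisjoint_gap.elim_finset hx hx' y hy (hBx' hyB)]

def glue (B₀ : Finset (Fin n)) (g : ∀ x : B₀, Finset (Finset (Fin (B₀.gap x).card))) :
    Finset (Finset (Fin n)) :=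
  insert B₀ (univ.biUnion fun x : B₀ => (g x).map (B₀.mapGap x))

noncomputable def restrictGap (P : Finset (Finset (Fin n))) (B₀ : Finset (Fin n)) (x : Fin n) :
    Finset (Finset (Fin (B₀.gap x).card)) :=
  (P.filter (· ⊆ B₀.gap x)).image (B₀.comapGap x)

theorem mem_glue : B ∈ glue B₀ g ↔ B = B₀ ∨ ∃ x : B₀, ∃ b ∈ g x, B₀.mapGap x b = B := by
  simp [glue]

theorem mem_restrictGap {b : Finset (Fin (B₀.gap x).card)} :
    b ∈ restrictGap P B₀ x ↔ ∃ B ∈ P, B ⊆ B₀.gap x ∧ B₀.comapGap x B = b := by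
  simp [restrictGap, and_assoc]

theorem glue_nonempty (hg : ∀ x : B₀, g x ∈ NCPartitions (B₀.gap x).card)
    (hB₀ : B₀.Nonempty) (hB : B ∈ glue B₀ g) : B.Nonempty := by
  obtain rfl | ⟨x, b, hb, rfl⟩ := mem_glue.1 hB
  · exact hB₀
  · exact ((mem_NCPartitions.1 (hg x)).1 b hb).map

theorem glue_existsUnique (hg : ∀ x : B₀, g x ∈ NCPartitions (B₀.gap x).card) (hz : IsBot z)
    (hzB₀ : z ∈ B₀) (w : Fin n) : ∃! B, B ∈ glue B₀ g ∧ w ∈ B := by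
  by_cases hw : w ∈ B₀
  · refine ⟨B₀, ⟨mem_insert_self _ _, hw⟩, fun B ⟨hB, hwB⟩ => ?_⟩
    obtain rfl | ⟨x, b, -, rfl⟩ := mem_glue.1 hB
    · rfl
    · exact absurd hw (notMem_of_mem_gap (mapGap_subset_gap b hwB))
  obtain ⟨x, hx, hwx⟩ :=
    exists_mem_gap hw ⟨z, hzB₀, (hz w).lt_of_ne fun h => hw (h ▸ hzB₀)⟩
  lift x to B₀ using hx
  obtain ⟨i, rfl⟩ := exists_gapEmb_eq hwx
  obtain ⟨b, ⟨hb, hib⟩, hbu⟩ := (mem_NCPartitions.1 (hg x)).2.1 i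
  refine ⟨B₀.mapGap x b, ⟨mem_glue.2 (.inr ⟨x, b, hb, rfl⟩), gapEmb_mem_mapGap.2 hib⟩,
    fun B ⟨hB, hiB⟩ => ?_⟩
  obtain rfl | ⟨x', b', hb', rfl⟩ := mem_glue.1 hB
  · exact absurd hiB hw
  obtain rfl := eq_of_mem_gap_of_mem_gap hwx (mapGap_subset_gap b' hiB)
  rw [hbu b' ⟨hb', gapEmb_mem_mapGap.1 hiB⟩]

/-- A crossing of `glue B₀ g` cannot involve `B₀`, since the gaps of `B₀` are intervals; so both
of its blocks lie in one gap, where they would cross in `g x`. -/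
theorem glue_not_crossing (hg : ∀ x : B₀, g x ∈ NCPartitions (B₀.gap x).card) :
    ¬∃ p₁ q₁ p₂ q₂ : Fin n, p₁ < q₁ ∧ q₁ < p₂ ∧ p₂ < q₂ ∧
      (∃ B ∈ glue B₀ g, p₁ ∈ B ∧ p₂ ∈ B) ∧ (∃ B ∈ glue B₀ g, q₁ ∈ B ∧ q₂ ∈ B) ∧
      ¬∃ B ∈ glue B₀ g, q₁ ∈ B ∧ p₂ ∈ B := by
  rintro ⟨p₁, q₁, p₂, q₂, h₁, h₂, h₃, ⟨Bp, hBp, hp₁, hp₂⟩, ⟨Bq, hBq, hq₁, hq₂⟩, hno⟩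
  obtain rfl | ⟨x, b, hb, rfl⟩ := mem_glue.1 hBp
  · obtain rfl | ⟨x, b, -, rfl⟩ := mem_glue.1 hBq
    · exact hno ⟨_, hBp, hq₁, hp₂⟩
    · exact notMem_of_mem_gap ((ordConnected_gap _ _).out (mapGap_subset_gap b hq₁)
        (mapGap_subset_gap b hq₂) ⟨h₂.le, h₃.le⟩) hp₂
  have hq₁x : q₁ ∈ B₀.gap x := (ordConnected_gap _ _).out (mapGap_subset_gap b hp₁)
    (mapGap_subset_gap b hp₂) ⟨h₁.le, h₂.le⟩
  obtain rfl | ⟨x', b', hb', rfl⟩ := mem_glue.1 hBq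
  · exact notMem_of_mem_gap hq₁x hq₁
  obtain rfl := eq_of_mem_gap_of_mem_gap hq₁x (mapGap_subset_gap b' hq₁)
  obtain ⟨i₁, -, rfl⟩ := mem_mapGap.1 hp₁
  obtain ⟨i₂, -, rfl⟩ := mem_mapGap.1 hp₂
  obtain ⟨j₁, -, rfl⟩ := mem_mapGap.1 hq₁
  obtain ⟨j₂, -, rfl⟩ := mem_mapGap.1 hq₂
  simp only [OrderEmbedding.lt_iff_lt, gapEmb_mem_mapGap] at h₁ h₂ h₃ hp₁ hp₂ hq₁ hq₂
  refine (mem_NCPartitions.1 (hg x)).2.2 ⟨i₁, j₁, i₂, j₂, h₁, h₂, h₃, ⟨b, hb, hp₁, hp₂⟩,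
    ⟨b', hb', hq₁, hq₂⟩, fun ⟨b'', hb'', hj₁, hi₂⟩ => hno ⟨B₀.mapGap x b'', ?_,
      gapEmb_mem_mapGap.2 hj₁, gapEmb_mem_mapGap.2 hi₂⟩⟩
  exact mem_glue.2 (.inr ⟨x, b'', hb'', rfl⟩)

theorem glue_mem (hg : ∀ x : B₀, g x ∈ NCPartitions (B₀.gap x).card) (hz : IsBot z)
    (hzB₀ : z ∈ B₀) : glue B₀ g ∈ NCPartitions n :=
  mem_NCPartitions.2 ⟨fun _ => glue_nonempty hg ⟨z, hzB₀⟩, glue_existsUnique hg hz hzB₀,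
    glue_not_crossing hg⟩

theorem restrictGap_mem (hP : P ∈ NCPartitions n) (hz : IsBot z) (hB₀ : B₀ ∈ P)
    (hzB₀ : z ∈ B₀) (hx : x ∈ B₀) : restrictGap P B₀ x ∈ NCPartitions (B₀.gap x).card := by
  obtain ⟨hPne, hPu, hPnc⟩ := mem_NCPartitions.1 hP
  refine mem_NCPartitions.2 ⟨fun b hb => ?_, fun i => ?_, ?_⟩
  · obtain ⟨B, hB, hBx, rfl⟩ := mem_restrictGap.1 hb
    obtain ⟨y, hy⟩ := hPne B hB
    obtain ⟨i, rfl⟩ := exists_gapEmb_eq (hBx hy)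
    exact ⟨i, mem_comapGap.2 hy⟩
  · obtain ⟨B, ⟨hB, hiB⟩, hBu⟩ := hPu (B₀.gapEmb x i)
    have hBx := subset_gap_of_mem_gap hP hz hB₀ hzB₀ hB hx hiB (gapEmb_mem_gap i)
    refine ⟨B₀.comapGap x B, ⟨mem_restrictGap.2 ⟨B, hB, hBx, rfl⟩, mem_comapGap.2 hiB⟩,
      fun b ⟨hb, hib⟩ => ?_⟩
    obtain ⟨B', hB', -, rfl⟩ := mem_restrictGap.1 hb
    rw [hBu B' ⟨hB', mem_comapGap.1 hib⟩]
  · rintro ⟨i₁, j₁, i₂, j₂, h₁, h₂, h₃, ⟨b, hb, hi₁, hi₂⟩, ⟨b', hb', hj₁, hj₂⟩, hno⟩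
    obtain ⟨B, hB, -, rfl⟩ := mem_restrictGap.1 hb
    obtain ⟨B', hB', -, rfl⟩ := mem_restrictGap.1 hb'
    rw [mem_comapGap] at hi₁ hi₂ hj₁ hj₂
    refine hPnc ⟨_, _, _, _, (B₀.gapEmb x).lt_iff_lt.2 h₁, (B₀.gapEmb x).lt_iff_lt.2 h₂,
      (B₀.gapEmb x).lt_iff_lt.2 h₃, ⟨B, hB, hi₁, hi₂⟩, ⟨B', hB', hj₁, hj₂⟩,
      fun ⟨B'', hB'', hj₁'', hi₂''⟩ => hno ⟨B₀.comapGap x B'', ?_, mem_comapGap.2 hj₁'',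
        mem_comapGap.2 hi₂''⟩⟩
    exact mem_restrictGap.2 ⟨B'', hB'',
      subset_gap_of_mem_gap hP hz hB₀ hzB₀ hB'' hx hj₁'' (gapEmb_mem_gap j₁), rfl⟩

theorem glue_restrictGap (hP : P ∈ NCPartitions n) (hz : IsBot z) (hB₀ : B₀ ∈ P)
    (hzB₀ : z ∈ B₀) : glue B₀ (fun x => restrictGap P B₀ x) = P := by
  ext B
  rw [mem_glue]
  constructor
  · rintro (rfl | ⟨x, b, hb, rfl⟩)
    · exact hB₀
    · obtain ⟨B, hB, hBx, rfl⟩ := mem_restrictGap.1 hb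
      rwa [mapGap_comapGap hBx]
  · intro hB
    refine or_iff_not_imp_left.2 fun hne => ?_
    obtain ⟨x, hx, hBx⟩ := exists_subset_gap hP hz hB₀ hzB₀ hB hne
    exact ⟨⟨x, hx⟩, _, mem_restrictGap.2 ⟨B, hB, hBx, rfl⟩, mapGap_comapGap hBx⟩

theorem restrictGap_glue (hg : ∀ x : B₀, g x ∈ NCPartitions (B₀.gap x).card) (x : B₀) :
    restrictGap (glue B₀ g) B₀ x = g x := by
  ext b
  rw [mem_restrictGap]
  constructor
  · rintro ⟨B, hB, hBx, rfl⟩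
    obtain rfl | ⟨x', b', hb', rfl⟩ := mem_glue.1 hB
    · exact absurd (hBx x.2) fun h => (mem_gap.1 h).1.false
    · obtain rfl := eq_of_mapGap_subset_gap ((mem_NCPartitions.1 (hg x')).1 b' hb') hBx
      rwa [comapGap_mapGap]
  · exact fun hb =>
      ⟨_, mem_glue.2 (.inr ⟨x, b, hb, rfl⟩), mapGap_subset_gap b, comapGap_mapGap b⟩

theorem prod_glue {M : Type*} [CommMonoid M]
    (hg : ∀ x : B₀, g x ∈ NCPartitions (B₀.gap x).card) (c : ℕ → M) :
    ∏ B ∈ glue B₀ g, c B.card = c B₀.card * ∏ x : B₀, ∏ b ∈ g x, c b.card := by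
  have hne : ∀ x b, b ∈ g x → b.Nonempty := fun x => (mem_NCPartitions.1 (hg x)).1
  have hB₀g : B₀ ∉ univ.biUnion fun x : B₀ => (g x).map (B₀.mapGap x) := by
    simp only [mem_biUnion, mem_univ, true_and, mem_map, not_exists, not_and]
    intro x b hb hbB₀
    obtain ⟨i, hi⟩ := hne x b hb
    have hiB₀ := gapEmb_mem_mapGap.2 hi
    rw [hbB₀] at hiB₀
    exact notMem_of_mem_gap (gapEmb_mem_gap i) hiB₀
  rw [glue, prod_insert hB₀g, prod_biUnion]
  · simp [card_map, mapGap]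
  · rintro x - x' - hxx'
    refine disjoint_left.2 fun B hB hB' => hxx' ?_
    obtain ⟨b, hb, rfl⟩ := mem_map.1 hB
    obtain ⟨b', -, hbb'⟩ := mem_map.1 hB'
    exact eq_of_mapGap_subset_gap (hne x b hb) (hbb' ▸ mapGap_subset_gap b')

theorem sum_filter_mem_eq_mul_prod {R : Type*} [CommSemiring R] (hz : IsBot z) (hzB₀ : z ∈ B₀)
    (c : ℕ → R) :
    ∑ P ∈ (NCPartitions n).filter (B₀ ∈ ·), ∏ B ∈ P, c B.card =
      c B₀.card * ∏ x ∈ B₀, ∑ Q ∈ NCPartitions (B₀.gap x).card, ∏ b ∈ Q, c b.card := by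
  rw [← prod_coe_sort, prod_univ_sum, mul_sum]
  refine sum_bij' (fun P _ x => restrictGap P B₀ x) (fun g _ => glue B₀ g) ?_ ?_ ?_ ?_ ?_
  · intro P hP
    obtain ⟨hP, hB₀⟩ := mem_filter.1 hP
    exact Fintype.mem_piFinset.2 fun x => restrictGap_mem hP hz hB₀ hzB₀ x.2
  · intro g hg
    exact mem_filter.2 ⟨glue_mem (Fintype.mem_piFinset.1 hg) hz hzB₀, mem_insert_self _ _⟩
  · intro P hP
    obtain ⟨hP, hB₀⟩ := mem_filter.1 hP
    exact glue_restrictGap hP hz hB₀ hzB₀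
  · intro g hg
    exact funext (restrictGap_glue (Fintype.mem_piFinset.1 hg))
  · intro P hP
    obtain ⟨hP, hB₀⟩ := mem_filter.1 hP
    conv_lhs => rw [← glue_restrictGap hP hz hB₀ hzB₀]
    exact prod_glue (fun x => restrictGap_mem hP hz hB₀ hzB₀ x.2) c

theorem sum_eq_sum_block_of_isBot {R : Type*} [CommSemiring R] (hz : IsBot z) (c : ℕ → R) :
    ∑ P ∈ NCPartitions n, ∏ B ∈ P, c B.card =
      ∑ B₀ ∈ univ.filter (z ∈ ·),
        c B₀.card * ∏ x ∈ B₀, ∑ Q ∈ NCPartitions (B₀.gap x).card, ∏ b ∈ Q, c b.card := by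
  have hblock : ∀ P ∈ NCPartitions n, ∃ B₀, P.filter (z ∈ ·) = {B₀} := by
    intro P hP
    obtain ⟨B₀, hB₀, hu⟩ := (mem_NCPartitions.1 hP).2.1 z
    exact ⟨B₀, eq_singleton_iff_unique_mem.2
      ⟨mem_filter.2 hB₀, fun B hB => hu B (mem_filter.1 hB)⟩⟩
  calc ∑ P ∈ NCPartitions n, ∏ B ∈ P, c B.card
      = ∑ P ∈ NCPartitions n, ∑ B₀ ∈ P.filter (z ∈ ·), ∏ B ∈ P, c B.card := by
        refine sum_congr rfl fun P hP => ?_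
        obtain ⟨B₀, hB₀⟩ := hblock P hP
        rw [hB₀, sum_singleton]
    _ = ∑ B₀ ∈ univ.filter (z ∈ ·),
          ∑ P ∈ (NCPartitions n).filter (B₀ ∈ ·), ∏ B ∈ P, c B.card :=
        sum_comm' fun P B₀ => by simp only [mem_filter, mem_univ, true_and]; tauto
    _ = _ := sum_congr rfl fun B₀ hB₀ => sum_filter_mem_eq_mul_prod hz (mem_filter.1 hB₀).2 c

end NCPartitions

section GapWeight

variable {R : Type*} [CommSemiring R] {n : ℕ}

def gapWeight {α : Type*} [LinearOrder α] [Fintype α] (a : ℕ → R) (B : Finset α) : R :=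
  ∏ x ∈ B, a (B.gap x).card

theorem gapWeight_insert_insert (a : ℕ → R) {t t' : Fin n} {B : Finset (Fin n)} (h : t < t')
    (hB : B ⊆ Ioi t') :
    gapWeight a (insert t (insert t' B)) = a (t' - t - 1) * gapWeight a (insert t' B) := by
  have hlt : ∀ x ∈ insert t' B, t < x := fun x hx =>
    (mem_insert.1 hx).elim (fun hx => hx ▸ h) fun hx => h.trans (mem_Ioi.1 (hB hx))
  rw [gapWeight, prod_insert fun ht => (hlt t ht).false, gap_insert_insert h hB, Fin.card_Ioo,
    gapWeight]
  exact congrArg _ (prod_congr rfl fun x hx => by rw [gap_insert_of_lt (hlt x hx)])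

theorem sum_powersetCard_succ_gapWeight (a : ℕ → R) (k : ℕ) (t : Fin n) :
    ∑ B ∈ (Ioi t).powersetCard (k + 1), gapWeight a (insert t B) =
      ∑ t' ∈ Ioi t,
        a (t' - t - 1) * ∑ B ∈ (Ioi t').powersetCard k, gapWeight a (insert t' B) := by
  rw [sum_powersetCard_succ_Ioi]
  refine sum_congr rfl fun t' ht' => ?_
  rw [mul_sum]
  exact sum_congr rfl fun B hB =>
    gapWeight_insert_insert a (mem_Ioi.1 ht') (mem_powersetCard.1 hB).1

theorem sum_filter_Ioi_mul_coeff (a : ℕ → R) (F : PowerSeries R) (k : ℕ) (t : Fin n)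
    (h : t + (k + 1) < n) :
    ∑ t' ∈ (Ioi t).filter (fun t' : Fin n => t' + k < n),
        a (t' - t - 1) * coeff (n - 1 - t' - k) F =
      coeff (n - 1 - t - (k + 1)) (mk a * F) := by
  rw [coeff_mul]
  refine sum_bij' (fun t' _ => (t' - t - 1, n - 1 - t' - k)) (fun p hp => ⟨t + 1 + p.1, ?_⟩)
    ?_ ?_ ?_ ?_ ?_
  · have := HasAntidiagonal.mem_antidiagonal.1 hp; omega
  · intro t' ht'
    have := mem_filter.1 ht'
    simp only [mem_Ioi, Fin.lt_def] at this
    simp only [HasAntidiagonal.mem_antidiagonal]; omega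
  · intro p hp
    have := HasAntidiagonal.mem_antidiagonal.1 hp
    simp only [mem_filter, mem_Ioi, Fin.lt_def]; omega
  · intro t' ht'
    have := mem_filter.1 ht'
    simp only [mem_Ioi, Fin.lt_def] at this
    ext; simp only; omega
  · intro p hp
    have := HasAntidiagonal.mem_antidiagonal.1 hp
    ext <;> simp only <;> omega
  · intro t' _
    rw [coeff_mk]

/-- The weights of the `(k + 1)`-point sets with least point `t` are the coefficients of
`(mk a) ^ (k + 1)`: the gaps after the points are `k + 1` parts summing to `n - 1 - t - k`. -/
theorem sum_powersetCard_gapWeight (a : ℕ → R) (k : ℕ) (t : Fin n) (h : t + k < n) :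
    ∑ B ∈ (Ioi t).powersetCard k, gapWeight a (insert t B) =
      coeff (n - 1 - t - k) (mk a ^ (k + 1)) := by
  induction k generalizing t with
  | zero => simp [gapWeight, gap_singleton, Fin.card_Ioi]
  | succ k ih =>
    have hempty : ∀ t' ∈ (Ioi t).filter (fun t' : Fin n => ¬(t' + k < n)),
        a (t' - t - 1) * ∑ B ∈ (Ioi t').powersetCard k, gapWeight a (insert t' B) = 0 := by
      intro t' ht'
      have hk : (Ioi t').card < k := by
        rw [Fin.card_Ioi]; have := (mem_filter.1 ht').2; omega
      rw [powersetCard_eq_empty.2 hk, sum_empty, mul_zero]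
    rw [sum_powersetCard_succ_gapWeight,
      ← sum_filter_add_sum_filter_not _ (fun t' : Fin n => t' + k < n), sum_eq_zero hempty,
      add_zero, sum_congr rfl fun t' ht' => by rw [ih t' (mem_filter.1 ht').2],
      sum_filter_Ioi_mul_coeff a _ k t h, pow_succ' (mk a) (k + 1)]

end GapWeight

theorem sum_NCPartitions_eq_sum_coeff_pow {R : Type*} [CommSemiring R] {n : ℕ} (hn : 0 < n)
    (c a : ℕ → R) (ha : ∀ g, ∑ Q ∈ NCPartitions g, ∏ b ∈ Q, c b.card = a g) :
    ∑ P ∈ NCPartitions n, ∏ B ∈ P, c B.card =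
      ∑ k ∈ range n, c (k + 1) * coeff (n - 1 - k) (mk a ^ (k + 1)) := by
  have hz : IsBot (⟨0, hn⟩ : Fin n) := fun y => Nat.zero_le y.val
  simp_rw [NCPartitions.sum_eq_sum_block_of_isBot hz, ha]
  rw [sum_filter_mem_eq_sum_powerset_Ioi hz, sum_powerset, Fin.card_Ioi, Fin.val_mk, Nat.sub_zero,
    Nat.sub_add_cancel hn]
  refine sum_congr rfl fun k hk => ?_
  have hw := sum_powersetCard_gapWeight a k (⟨0, hn⟩ : Fin n) (by simpa using hk)
  rw [Fin.val_mk, Nat.sub_zero] at hw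
  rw [← hw, mul_sum]
  refine sum_congr rfl fun B hB => ?_
  rw [card_insert_of_notMem fun h => notMem_Ioi_self ((mem_powersetCard.1 hB).1 h),
    (mem_powersetCard.1 hB).2]
  rfl

theorem moments_eq_subst_cumulants {m c : ℕ → ℂ}
    (hmc : ∀ n, 1 ≤ n → m n = ∑ P ∈ NCPartitions n, ∏ B ∈ P, c B.card) :
    (PowerSeries.mk fun n => if n = 0 then 0 else m n) =
      subst (X * (1 + PowerSeries.mk fun n => if n = 0 then 0 else m n))
        (PowerSeries.mk fun n => if n = 0 then 0 else c n) := by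
  set a : ℕ → ℂ := fun n => if n = 0 then 1 else m n
  have ha : ∀ g, ∑ Q ∈ NCPartitions g, ∏ b ∈ Q, c b.card = a g := by
    rintro (_ | g)
    · simp [a, NCPartitions_zero]
    · exact (hmc _ (Nat.succ_pos g)).symm
  have hM : (1 + PowerSeries.mk fun n => if n = 0 then 0 else m n) = PowerSeries.mk a := by
    ext n
    by_cases hn : n = 0 <;> simp [a, hn, coeff_one]
  ext n
  rw [hM, coeff_subst_eq_sum_range (by simp), sum_range_succ']
  simp_rw [mul_pow, coeff_X_pow_mul']
  rcases n with _ | n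
  · simp
  rw [coeff_mk, if_neg n.succ_ne_zero, hmc _ n.succ_pos,
    sum_NCPartitions_eq_sum_coeff_pow n.succ_pos c a ha]
  simp only [coeff_mk, Nat.add_one_ne_zero, if_false, if_true, zero_mul, add_zero]
  refine sum_congr rfl fun k hk => ?_
  rw [if_pos (by simpa using hk), Nat.succ_sub_one, Nat.add_sub_add_right]

/-- Clearing the denominators, `((1 + z)/z)·M⁻¹(z) = R⁻¹(z)/z` reads `(1 + z)·M⁻¹(z) = R⁻¹(z)`. -/
theorem s_transform_moments_eq_cumulants_general (m c : ℕ → ℂ)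
    (hmc : ∀ n, 1 ≤ n → m n = ∑ P ∈ NCPartitions n, ∏ B ∈ P, c B.card)
    (MInv RInv : PowerSeries ℂ)
    (hM0 : PowerSeries.constantCoeff MInv = 0)
    (hM1 : pscomp (PowerSeries.mk fun n => if n = 0 then 0 else m n) MInv = PowerSeries.X)
    (hR2 : pscomp RInv (PowerSeries.mk fun n => if n = 0 then 0 else c n) = PowerSeries.X) :
    (1 + PowerSeries.X) * MInv = RInv := by
  set M : PowerSeries ℂ := PowerSeries.mk fun n => if n = 0 then 0 else m n
  set R : PowerSeries ℂ := PowerSeries.mk fun n => if n = 0 then 0 else c n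
  set A : PowerSeries ℂ := X * (1 + M)
  have hR0 : constantCoeff R = 0 := by simp [R, ← coeff_zero_eq_constantCoeff_apply]
  have hMInv : HasSubst MInv := .of_constantCoeff_zero' hM0
  have hA : HasSubst A := .of_constantCoeff_zero' (by simp [A])
  have hAMInv : HasSubst (subst MInv A) := by
    rw [← coe_substAlgHom hMInv]
    exact hA.comp hMInv
  rw [pscomp_eq_subst hM0] at hM1
  rw [pscomp_eq_subst hR0] at hR2
  calc (1 + X) * MInv = subst MInv A := by
        rw [← coe_substAlgHom hMInv, map_mul, map_add, map_one, coe_substAlgHom, hM1,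
          subst_X hMInv]
        ring
    _ = subst (subst MInv A) (subst R RInv) := by rw [hR2, subst_X hAMInv]
    _ = subst (subst MInv (subst A R)) RInv := by
        rw [subst_comp_subst_apply (.of_constantCoeff_zero' hR0) hAMInv,
          subst_comp_subst_apply hA hMInv]
    _ = RInv := by rw [← moments_eq_subst_cumulants hmc, hM1, X_subst]

/-- For a distribution with moments `mₙ` (`m₁ ≠ 0`) and free cumulants `cₙ` (related by
the moment-cumulant formula over non-crossing partitions), the `S`-transform computed
from moments, `((1+z)/z)·M⁻¹(z)`, equals the one computed from cumulants, `R⁻¹(z)/z`;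
clearing the factor `z`, this says `(1 + z)·M⁻¹(z) = R⁻¹(z)` where `M⁻¹`, `R⁻¹` are the
compositional inverses of the moment series and the cumulant series. -/
theorem s_transform_moments_eq_cumulants (m c : ℕ → ℂ) (hm : m 1 ≠ 0)
    (hmc : ∀ n, 1 ≤ n → m n = ∑ P ∈ NCPartitions n, ∏ B ∈ P, c B.card)
    (MInv RInv : PowerSeries ℂ)
    (hM0 : PowerSeries.constantCoeff MInv = 0)
    (hR0 : PowerSeries.constantCoeff RInv = 0)
    (hM1 : pscomp (PowerSeries.mk fun n => if n = 0 then 0 else m n) MInv = PowerSeries.X)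
    (hM2 : pscomp MInv (PowerSeries.mk fun n => if n = 0 then 0 else m n) = PowerSeries.X)
    (hR1 : pscomp (PowerSeries.mk fun n => if n = 0 then 0 else c n) RInv = PowerSeries.X)
    (hR2 : pscomp RInv (PowerSeries.mk fun n => if n = 0 then 0 else c n) = PowerSeries.X) :
    (1 + PowerSeries.X) * MInv = RInv :=
  s_transform_moments_eq_cumulants_general m c hmc MInv RInv hM0 hM1 hR2
end

section
/- Let l be an isometric left shift with l*l = 1, l*Ω = 0, and τ the vacuum state. For f ∈ ℂ[[z]] with f(0) ≠ 0 and a = (1+l)f(l*), the distribution μ_a of a with respect to τ satisfies τ(a) = f(0) ≠ 0 and S_{μ_a}(z) = 1/f(z). -/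
/-- Haagerup's canonical operator `a = (1 + l) f(l*)` on the full Fock space of a
one-dimensional Hilbert space, realized algebraically on the span of the basis vectors
`δ_k` (`k ∈ ℕ`): `l δ_k = δ_{k+1}`, `(l*)ⁿ δ_k = δ_{k-n}` for `n ≤ k` and `0` otherwise,
so `a δ_k = Σ_{n=0}^{k} f_n (δ_{k-n} + δ_{k-n+1})` where `f = Σ f_n zⁿ`. -/
noncomputable def bOp (f : PowerSeries ℂ) : (ℕ →₀ ℂ) →ₗ[ℂ] (ℕ →₀ ℂ) :=
  Finsupp.lsum ℂ fun k =>
    LinearMap.toSpanSingleton ℂ (ℕ →₀ ℂ)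
      (∑ n ∈ Finset.range (k + 1), PowerSeries.coeff n f •
        (Finsupp.single (k - n) (1 : ℂ) + Finsupp.single (k - n + 1) (1 : ℂ)))

/-!
Pair finitely supported vectors with power series by `⟨v, p⟩ = ∑ vᵢ pᵢ`. For this pairing the
transpose of `a = (1 + l) f(l*)` is `T p = f (p + l* p)`, so `τ(aᵏ) = (Tᵏ 1)(0)`. With
`g = z / ((1 + z) f)`, both `Φ p = ∑ₖ (Tᵏ p)(0) gᵏ` and `Ψ p = (1 + z) p` solve
`Φ p = p(0) + g Φ (T p)`, whose solution is unique because `g(0) = 0`; at `p = 1` this says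
`1 + M(g(z)) = 1 + z`. Since `g` has an invertible linear coefficient it has a two-sided
compositional inverse, which must therefore be `M`.
-/

open PowerSeries

namespace PowerSeries

variable {R : Type*} [CommRing R]

theorem eq_zero_of_forall_eq_mul {ι : Type*} {g : R⟦X⟧} (hg : constantCoeff g = 0)
    {D : ι → R⟦X⟧} {T : ι → ι} (hD : ∀ i, D i = g * D (T i)) (i : ι) : D i = 0 := by
  have hdvd : ∀ n i, X ^ n ∣ D i := by
    intro n
    induction n with
    | zero => simp
    | succ n ih =>
      intro i
      rw [hD i, pow_succ']
      exact mul_dvd_mul (X_dvd_iff.mpr hg) (ih (T i))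
  ext n
  exact X_pow_dvd_iff.mp (hdvd (n + 1) i) n n.lt_succ_self

theorem subst_eq_X_of_subst_eq_X {g M : R⟦X⟧} (hg : constantCoeff g = 0)
    (hg₁ : IsUnit (coeff 1 g)) (h : M.subst g = (X : R⟦X⟧)) : g.subst M = (X : R⟦X⟧) := by
  have hQ : HasSubst (g.substInvOfIsUnit hg₁) := HasSubst.substInvOfIsUnit g hg₁
  have hgQ : g.subst (g.substInvOfIsUnit hg₁) = (X : R⟦X⟧) :=
    subst_substInvOfIsUnit_right g hg hg₁
  have hMQ : M = g.substInvOfIsUnit hg₁ := by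
    have hassoc := subst_comp_subst_apply (HasSubst.of_constantCoeff_zero' hg) hQ M
    rw [h, hgQ, subst_X hQ, X_subst] at hassoc
    exact hassoc.symm
  rw [hMQ, hgQ]

/-- `f(l)(1 + l*)` acting on power series, `l` being multiplication by `X` and `l*` the backward
shift: the transpose of `bOp f` under `⟨v, p⟩ = ∑ vᵢ pᵢ`. -/
noncomputable def shiftTranspose (f p : R⟦X⟧) : R⟦X⟧ :=
  f * (p + mk fun n => coeff (n + 1) p)

theorem subst_mk_constantCoeff_iterate_shiftTranspose {f g : R⟦X⟧} (hg : constantCoeff g = 0)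
    (hgf : g * ((1 + X) * f) = X) (p : R⟦X⟧) :
    (mk fun k => constantCoeff ((shiftTranspose f)^[k] p)).subst g = (1 + X) * p := by
  have hsubst := HasSubst.of_constantCoeff_zero' hg
  set S : R⟦X⟧ → R⟦X⟧ := fun p => (mk fun k => constantCoeff ((shiftTranspose f)^[k] p)).subst g
  have hS : ∀ p, S p = C (constantCoeff p) + g * S (shiftTranspose f p) := by
    intro p
    have hshift := eq_X_mul_shift_add_const (mk fun k => constantCoeff ((shiftTranspose f)^[k] p))
    simp only [coeff_mk, Function.iterate_succ_apply, constantCoeff_mk, Function.iterate_zero,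
      id_eq] at hshift
    simp only [S]
    rw [hshift, subst_add hsubst, subst_mul hsubst, subst_X hsubst, subst_C, add_comm]
    rfl
  have hp : ∀ p : R⟦X⟧,
      (1 + X) * p = C (constantCoeff p) + g * ((1 + X) * shiftTranspose f p) := by
    intro p
    rw [shiftTranspose]
    linear_combination eq_X_mul_shift_add_const p - (p + mk fun n => coeff (n + 1) p) * hgf
  rw [← sub_eq_zero]
  exact eq_zero_of_forall_eq_mul hg (D := fun p => S p - (1 + X) * p)
    (T := shiftTranspose f) (fun p => by rw [hS p, hp p]; ring) p

end PowerSeries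

theorem pscomp_eq_subst_s18 {p r : ℂ⟦X⟧} (hr : constantCoeff r = 0) : pscomp p r = p.subst r := by
  ext n
  rw [pscomp, coeff_mk, coeff_subst' (HasSubst.of_constantCoeff_zero' hr)]
  refine (finsum_eq_sum_of_support_subset _ fun d hd => ?_).symm
  simp only [Function.mem_support, Finset.coe_range, Set.mem_Iio] at hd ⊢
  by_contra! hnd
  exact hd (by
    rw [X_pow_dvd_iff.mp (pow_dvd_pow_of_dvd (X_dvd_iff.mpr hr) d) n (by omega), mul_zero])

theorem linearCombination_coeff_comp_bOp (f p : ℂ⟦X⟧) :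
    Finsupp.linearCombination ℂ (fun i => coeff i p) ∘ₗ bOp f =
      Finsupp.linearCombination ℂ fun i => coeff i (shiftTranspose f p) := by
  refine Finsupp.lhom_ext fun k b => ?_
  simp [bOp, shiftTranspose, coeff_mul, Finset.Nat.sum_antidiagonal_eq_sum_range_succ_mk,
    Finset.mul_sum, mul_add, Finset.sum_add_distrib]

theorem linearCombination_coeff_bOp_pow (f p : ℂ⟦X⟧) (k : ℕ) (v : ℕ →₀ ℂ) :
    Finsupp.linearCombination ℂ (fun i => coeff i p) ((bOp f ^ k) v) =
      Finsupp.linearCombination ℂ (fun i => coeff i ((shiftTranspose f)^[k] p)) v := by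
  induction k generalizing p with
  | zero => rfl
  | succ k ih =>
    rw [pow_succ', Module.End.mul_apply, ← LinearMap.comp_apply,
      linearCombination_coeff_comp_bOp, ih, Function.iterate_succ_apply]

theorem bOp_pow_single_zero_apply_zero (f : ℂ⟦X⟧) (k : ℕ) :
    ((bOp f ^ k) (Finsupp.single 0 1)) 0 = constantCoeff ((shiftTranspose f)^[k] 1) := by
  have hvac : ∀ v : ℕ →₀ ℂ,
      Finsupp.linearCombination ℂ (fun i => coeff i (1 : ℂ⟦X⟧)) v = v 0 := by
    intro v
    simp [Finsupp.linearCombination_apply, coeff_one, Finsupp.sum_ite_eq', eq_comm]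
  rw [← hvac, linearCombination_coeff_bOp_pow]
  simp

/-- For `a = (1+l)f(l*)` with `f(0) ≠ 0` and the vacuum state `τ(T) = ⟨T δ₀, δ₀⟩`, one
has `τ(a) = f(0) ≠ 0` and `S_{μ_a}(z) = 1/f(z)`: the moment series
`M(z) = Σ_{k≥1} τ(aᵏ) zᵏ` has compositional inverse `M⁻¹(z) = z·((1+z)f(z))⁻¹`, i.e.
`S_{μ_a}(z) = ((1+z)/z)·M⁻¹(z) = 1/f(z)`. -/
theorem bOp_s_transform (f : PowerSeries ℂ) (hf : PowerSeries.constantCoeff f ≠ 0) :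
    ((bOp f) (Finsupp.single 0 1)) 0 = PowerSeries.constantCoeff f ∧
    pscomp (PowerSeries.mk fun k => if k = 0 then 0
        else ((bOp f ^ k) (Finsupp.single 0 1)) 0)
      (PowerSeries.X * ((1 + PowerSeries.X) * f)⁻¹) = PowerSeries.X ∧
    pscomp (PowerSeries.X * ((1 + PowerSeries.X) * f)⁻¹)
      (PowerSeries.mk fun k => if k = 0 then 0
        else ((bOp f ^ k) (Finsupp.single 0 1)) 0) = PowerSeries.X := by
  set g : ℂ⟦X⟧ := X * ((1 + X) * f)⁻¹
  set M : ℂ⟦X⟧ := mk fun k => if k = 0 then 0 else ((bOp f ^ k) (Finsupp.single 0 1)) 0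
  have hg₀ : constantCoeff g = 0 := by simp [g]
  have hg₁ : IsUnit (coeff 1 g) := by simp [g, hf]
  have hM₀ : constantCoeff M = 0 := by simp [M]
  have hgf : g * ((1 + X) * f) = X := by
    rw [mul_assoc, PowerSeries.inv_mul_cancel _ (by simpa using hf), mul_one]
  have hMg : M.subst g = X := by
    have h1M : 1 + M = mk fun k => constantCoeff ((shiftTranspose f)^[k] 1) := by
      ext (_ | k) <;> simp [M, bOp_pow_single_zero_apply_zero]
    have hres := subst_mk_constantCoeff_iterate_shiftTranspose hg₀ hgf 1
    rwa [← h1M, ← coe_substAlgHom (HasSubst.of_constantCoeff_zero' hg₀), map_add, map_one,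
      mul_one, add_right_inj, coe_substAlgHom] at hres
  refine ⟨by simpa [shiftTranspose] using bOp_pow_single_zero_apply_zero f 1, ?_, ?_⟩
  · rw [pscomp_eq_subst_s18 hg₀, hMg]
  · rw [pscomp_eq_subst_s18 hM₀]
    exact subst_eq_X_of_subst_eq_X hg₀ hg₁ hMg
end
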